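/- arXiv:2112.11362 — 4 statements merged into one kernel-verified Lean document; each statement's English description precedes it below -/
import Mathlib

section
/- The rule D2+ is derivable in AX+_basic for variables with finite range: if R(X) is finite, S ⊆ R(X) is a finite set of values of X containing all values of X mentioned in the formula φ ⇒ [Y ← y]ψ and containing some value of R(X) not mentioned in that formula if such a value exists, and AX+_basic ⊢ φ ⇒ ⋀_{x ∈ S} [Y ← y](ψ ⇒ X ≠ x), then AX+_basic ⊢ φ ⇒ [Y ← y]¬ψ. -/
namespace Causal

/-- A signature: exogenous variables `U`, endogenous variables `V`, a universe
of values `Val`, range functions `RU`, `RV`, and a set `Int` of allowed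
interventions (partial assignments of in-range values to endogenous variables). -/
structure Signature : Type 1 where
  U : Type
  V : Type
  Val : Type
  RU : U → Set Val
  RV : V → Set Val
  RU_nonempty : ∀ Y, (RU Y).Nonempty
  RV_nonempty : ∀ X, (RV X).Nonempty
  Int : Set (V → Option Val)
  Int_ok : ∀ I ∈ Int, ∀ X x, I X = some x → x ∈ RV X

variable {S : Signature}

/-- A finite signature: finitely many variables, each with finite range. -/
def Signature.IsFinite (S : Signature) : Prop :=
  Finite S.U ∧ Finite S.V ∧ (∀ Y, (S.RU Y).Finite) ∧ (∀ X, (S.RV X).Finite)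

/-- An intervention is valid if it only sets variables to values in their ranges. -/
def ValidInt (S : Signature) (I : S.V → Option S.Val) : Prop :=
  ∀ X x, I X = some x → x ∈ S.RV X

/-- A universal signature: all (valid) interventions are allowed. -/
def Signature.Universal (S : Signature) : Prop :=
  S.Int = {I | ValidInt S I}

/-- A context: an assignment of in-range values to the exogenous variables. -/
def Context (S : Signature) : Type := {u : S.U → S.Val // ∀ Y, u Y ∈ S.RU Y}

/-- An assignment of in-range values to the endogenous variables (an outcome). -/
def Assignment (S : Signature) : Type := {v : S.V → S.Val // ∀ X, v X ∈ S.RV X}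

open Classical in
/-- `updInt I X x` is the intervention `I; X ← x`. -/
noncomputable def updInt (I : S.V → Option S.Val) (X : S.V) (x : S.Val) :
    S.V → Option S.Val :=
  fun Y => if Y = X then some x else I Y

/-- Events: Boolean combinations of primitive events `X = x` (with `x ∈ R(X)`). -/
inductive Event (S : Signature) : Type where
  | tru : Event S
  | prim : (X : S.V) → (x : S.Val) → x ∈ S.RV X → Event S
  | not : Event S → Event S
  | and : Event S → Event S → Event S
  | or : Event S → Event S → Event S

namespace Event

def imp (a b : Event S) : Event S := Event.or (Event.not a) b

/-- Satisfaction of an event by an assignment. -/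
def sat (v : Assignment S) : Event S → Prop
  | .tru => True
  | .prim X x _ => v.1 X = x
  | .not e => ¬ Event.sat v e
  | .and a b => Event.sat v a ∧ Event.sat v b
  | .or a b => Event.sat v a ∨ Event.sat v b

/-- Boolean evaluation of an event under an arbitrary valuation of its atoms;
used to define propositional tautologies. -/
def evalB (val : S.V → S.Val → Bool) : Event S → Bool
  | .tru => true
  | .prim X x _ => val X x
  | .not e => !(Event.evalB val e)
  | .and a b => Event.evalB val a && Event.evalB val b
  | .or a b => Event.evalB val a || Event.evalB val b

/-- An event is a propositional tautology if it is true under every Boolean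
valuation of its primitive events. -/
def Taut (e : Event S) : Prop := ∀ val, Event.evalB val e = true

/-- The value `x` of variable `X` is mentioned in the event. -/
def mentionsVal (X : S.V) (x : S.Val) : Event S → Prop
  | .tru => False
  | .prim X' x' _ => X' = X ∧ x' = x
  | .not e => Event.mentionsVal X x e
  | .and a b => Event.mentionsVal X x a ∨ Event.mentionsVal X x b
  | .or a b => Event.mentionsVal X x a ∨ Event.mentionsVal X x b

def bigAnd (l : List (Event S)) : Event S := l.foldr Event.and Event.tru

def bigOr (l : List (Event S)) : Event S := l.foldr Event.or (Event.not Event.tru)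

/-- The disjunction `⋁_{x ∈ l} X = x`. -/
def disjEq (X : S.V) (l : List {x : S.Val // x ∈ S.RV X}) : Event S :=
  bigOr (l.map fun x => Event.prim X x.1 x.2)

/-- The conjunction `⋀ X = x` over a list of (variable, value) pairs. -/
def conjEqL (l : List ((X : S.V) × {x : S.Val // x ∈ S.RV X})) : Event S :=
  bigAnd (l.map fun p => Event.prim p.1 p.2.1 p.2.2)

/-- Conjunctive formulas: conjunctions of literals `X = x` and `X ≠ x`. -/
inductive Conjunctive : Event S → Prop
  | tru : Conjunctive Event.tru
  | eq (X x hx) : Conjunctive (Event.prim X x hx)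
  | ne (X x hx) : Conjunctive (Event.not (Event.prim X x hx))
  | and {a b} : Conjunctive a → Conjunctive b → Conjunctive (Event.and a b)

/-- The set of conjuncts of a (conjunctive) formula. -/
def conjuncts : Event S → Set (Event S)
  | .tru => ∅
  | .and a b => Event.conjuncts a ∪ Event.conjuncts b
  | e => {e}

/-- Membership in the restricted language: only named variables and named values. -/
def InLang (W : Set S.V) (R' : S.V → Set S.Val) : Event S → Prop
  | .tru => True
  | .prim X x _ => X ∈ W ∧ x ∈ R' X
  | .not e => Event.InLang W R' e
  | .and a b => Event.InLang W R' a ∧ Event.InLang W R' b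
  | .or a b => Event.InLang W R' a ∧ Event.InLang W R' b

end Event

/-- Causal formulas: Boolean combinations of atomic formulas `[Y ← y]φ`
with `Y ← y` an allowed intervention and `φ` an event. -/
inductive CForm (S : Signature) : Type where
  | tru : CForm S
  | box : (I : S.V → Option S.Val) → I ∈ S.Int → Event S → CForm S
  | not : CForm S → CForm S
  | and : CForm S → CForm S → CForm S
  | or : CForm S → CForm S → CForm S

namespace CForm

def imp (a b : CForm S) : CForm S := CForm.or (CForm.not a) b

def iff (a b : CForm S) : CForm S := CForm.and (imp a b) (imp b a)

/-- `⟨Y ← y⟩φ` abbreviates `¬[Y ← y]¬φ`. -/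
def dia (I : S.V → Option S.Val) (hI : I ∈ S.Int) (e : Event S) : CForm S :=
  CForm.not (CForm.box I hI (Event.not e))

/-- Satisfaction of a causal formula at a context, relative to an outcome map `O`. -/
def sat (O : (I : S.V → Option S.Val) → I ∈ S.Int → Context S → Set (Assignment S))
    (u : Context S) : CForm S → Prop
  | .tru => True
  | .box I hI e => ∀ v ∈ O I hI u, e.sat v
  | .not φ => ¬ CForm.sat O u φ
  | .and a b => CForm.sat O u a ∧ CForm.sat O u b
  | .or a b => CForm.sat O u a ∨ CForm.sat O u b

/-- Boolean evaluation of a causal formula under an arbitrary valuation of its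
atomic formulas; used to define propositional tautologies. -/
def evalB (val : (S.V → Option S.Val) → Event S → Bool) : CForm S → Bool
  | .tru => true
  | .box I _ e => val I e
  | .not φ => !(CForm.evalB val φ)
  | .and a b => CForm.evalB val a && CForm.evalB val b
  | .or a b => CForm.evalB val a || CForm.evalB val b

/-- A causal formula is an instance of a propositional tautology if it is true
under every Boolean valuation of its atomic formulas. -/
def Taut (φ : CForm S) : Prop := ∀ val, CForm.evalB val φ = true

/-- The value `x` of variable `X` is mentioned in the causal formula
(either in a primitive event or in an intervention). -/
def mentionsVal (X : S.V) (x : S.Val) : CForm S → Prop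
  | .tru => False
  | .box I _ e => I X = some x ∨ e.mentionsVal X x
  | .not φ => CForm.mentionsVal X x φ
  | .and a b => CForm.mentionsVal X x a ∨ CForm.mentionsVal X x b
  | .or a b => CForm.mentionsVal X x a ∨ CForm.mentionsVal X x b

def bigAnd (l : List (CForm S)) : CForm S := l.foldr CForm.and CForm.tru

def bigOr (l : List (CForm S)) : CForm S := l.foldr CForm.or (CForm.not CForm.tru)

/-- Membership in the restricted language `L_{W,R',I'}(S)`. -/
def InLang (W : Set S.V) (R' : S.V → Set S.Val) (I' : Set (S.V → Option S.Val)) :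
    CForm S → Prop
  | .tru => True
  | .box I _ e => I ∈ I' ∧ e.InLang W R'
  | .not φ => CForm.InLang W R' I' φ
  | .and a b => CForm.InLang W R' I' a ∧ CForm.InLang W R' I' b
  | .or a b => CForm.InLang W R' I' a ∧ CForm.InLang W R' I' b

end CForm

/-- A structural equations model over `S`: each endogenous variable gets an
equation determining its value from the values of all other variables
(formally, `F X u v` does not depend on `v X`). -/
structure SEM (S : Signature) where
  F : S.V → (S.U → S.Val) → (S.V → S.Val) → S.Val
  F_range : ∀ X uu vv, F X uu vv ∈ S.RV X
  F_indep_self : ∀ X uu vv vv', (∀ Y, Y ≠ X → vv Y = vv' Y) → F X uu vv = F X uu vv'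

namespace SEM

/-- The outcomes of a SEM under an intervention: solutions of the modified equations. -/
def outcomes (M : SEM S) (u : Context S) (I : S.V → Option S.Val) :
    Set (Assignment S) :=
  {v | ∀ X, (∀ x, I X = some x → v.1 X = x) ∧ (I X = none → v.1 X = M.F X u.1 v.1)}

def sat (M : SEM S) (u : Context S) (φ : CForm S) : Prop :=
  φ.sat (fun I _ u' => M.outcomes u' I) u

def Valid (M : SEM S) (φ : CForm S) : Prop := ∀ u, M.sat u φ

/-- `X` is independent of `Y` in context `uu`: the equation for `X` does not
depend on the value of `Y`. -/
def IndepAt (M : SEM S) (uu : S.U → S.Val) (X Y : S.V) : Prop :=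
  ∀ vv vv', (∀ Z, Z ≠ Y → vv Z = vv' Z) → M.F X uu vv = M.F X uu vv'

/-- An acyclic (recursive) SEM. -/
def Acyclic (M : SEM S) : Prop :=
  ∀ u : Context S, ∃ lt : S.V → S.V → Prop, IsStrictTotalOrder S.V lt ∧
    ∀ X Y, lt X Y → M.IndepAt u.1 X Y

end SEM

/-- A generalized structural equations model: an arbitrary (effective) map from
allowed interventions and contexts to sets of outcomes. -/
structure GSEM (S : Signature) where
  F : (I : S.V → Option S.Val) → I ∈ S.Int → Context S → Set (Assignment S)
  effective : ∀ I hI u v, v ∈ F I hI u → ∀ X x, I X = some x → v.1 X = x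

namespace GSEM

def sat (M : GSEM S) (u : Context S) (φ : CForm S) : Prop :=
  φ.sat M.F u

def Valid (M : GSEM S) (φ : CForm S) : Prop := ∀ u, M.sat u φ

/-- A finitary GSEM: all outcome sets are finite. -/
def Finitary (M : GSEM S) : Prop := ∀ I hI u, (M.F I hI u).Finite

end GSEM

/-- Equivalence of two GSEMs: same outcomes for all contexts and allowed interventions. -/
def GSEM.equiv (M M' : GSEM S) : Prop := ∀ I hI u, M.F I hI u = M'.F I hI u

/-- `L(S)`-equivalence of two GSEMs: they agree on all causal formulas. -/
def GSEM.LEquiv (M M' : GSEM S) : Prop := ∀ u φ, M.sat u φ ↔ M'.sat u φ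

/-- Equivalence of a SEM and a GSEM. -/
def SEM.equivGSEM (M : SEM S) (M' : GSEM S) : Prop :=
  ∀ (I : S.V → Option S.Val) (hI : I ∈ S.Int) (u : Context S),
    M.outcomes u I = M'.F I hI u

/-- The projection of an outcome set to a single variable. -/
def projSet (T : Set (Assignment S)) (Y : S.V) : Set S.Val := (fun v => v.1 Y) '' T

/-- The restriction of an outcome set to a set of variables. -/
def restrictSet (T : Set (Assignment S)) (Wv : Set S.V) : Set (Wv → S.Val) :=
  (fun (v : Assignment S) (Y : Wv) => v.1 Y.1) '' T

/-! ### Axiom schemas -/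

/-- D0: all instances of propositional tautologies. -/
def AxD0 (S : Signature) : Set (CForm S) := {φ | φ.Taut}

/-- D1 (functionality): `[Y ← y](X = x ⇒ X ≠ x')` for `x ≠ x'`. -/
def AxD1 (S : Signature) : Set (CForm S) :=
  {φ | ∃ (I : S.V → Option S.Val) (hI : I ∈ S.Int) (X : S.V) (x x' : S.Val)
      (hx : x ∈ S.RV X) (hx' : x' ∈ S.RV X), x ≠ x' ∧
    φ = CForm.box I hI (Event.imp (Event.prim X x hx) (Event.not (Event.prim X x' hx')))}

/-- D2 (definiteness): `[Y ← y](⋁_{x ∈ R(X)} X = x)`. -/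
def AxD2 (S : Signature) : Set (CForm S) :=
  {φ | ∃ (I : S.V → Option S.Val) (hI : I ∈ S.Int) (X : S.V)
      (l : List {x : S.Val // x ∈ S.RV X}),
    (∀ x : {x : S.Val // x ∈ S.RV X}, x ∈ l) ∧ φ = CForm.box I hI (Event.disjEq X l)}

/-- D3 (composition): `⟨X ← x⟩(W = w ∧ φ) ⇒ ⟨X ← x; W ← w⟩φ`. -/
def AxD3 (S : Signature) : Set (CForm S) :=
  {ψ | ∃ (I : S.V → Option S.Val) (hI : I ∈ S.Int) (W : S.V) (w : S.Val)
      (hw : w ∈ S.RV W) (hIW : updInt I W w ∈ S.Int) (e : Event S),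
    ψ = CForm.imp (CForm.dia I hI (Event.and (Event.prim W w hw) e))
          (CForm.dia (updInt I W w) hIW e)}

/-- D4 (effectiveness): `[X ← x](X = x)`. -/
def AxD4 (S : Signature) : Set (CForm S) :=
  {φ | ∃ (I : S.V → Option S.Val) (hI : I ∈ S.Int) (X : S.V) (x : S.Val)
      (hx : x ∈ S.RV X), I X = some x ∧ φ = CForm.box I hI (Event.prim X x hx)}

/-- D5 (reversibility), with `Z = V − (X ∪ {W, Y})`. -/
def AxD5 (S : Signature) : Set (CForm S) :=
  {φ | ∃ (I : S.V → Option S.Val) (hI : I ∈ S.Int) (Y : S.V) (y : S.Val)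
      (hy : y ∈ S.RV Y) (W : S.V) (w : S.Val) (hw : w ∈ S.RV W)
      (hIY : updInt I Y y ∈ S.Int) (hIW : updInt I W w ∈ S.Int)
      (lZ : List ((X : S.V) × {x : S.Val // x ∈ S.RV X})),
    (lZ.map Sigma.fst).Nodup ∧
    (∀ Z : S.V, (∃ p ∈ lZ, p.1 = Z) ↔ (I Z = none ∧ Z ≠ W ∧ Z ≠ Y)) ∧
    φ = CForm.imp
      (CForm.and
        (CForm.dia (updInt I Y y) hIY (Event.and (Event.prim W w hw) (Event.conjEqL lZ)))
        (CForm.dia (updInt I W w) hIW (Event.and (Event.prim Y y hy) (Event.conjEqL lZ))))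
      (CForm.dia I hI (Event.and (Event.prim W w hw)
        (Event.and (Event.prim Y y hy) (Event.conjEqL lZ))))}

/-- A disjunct of the formula `Y ⇝ Z` ("Y affects Z"). -/
noncomputable def ltComp (I : S.V → Option S.Val) (hI : I ∈ S.Int) (Y : S.V) (y : S.Val)
    (hIY : updInt I Y y ∈ S.Int) (Z : S.V) (z z' : S.Val)
    (hz : z ∈ S.RV Z) (hz' : z' ∈ S.RV Z) : CForm S :=
  CForm.and (CForm.box I hI (Event.prim Z z hz))
    (CForm.box (updInt I Y y) hIY (Event.prim Z z' hz'))

/-- `φ` is (an instance of) the formula `Y ⇝ Z`: the disjunction, over all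
interventions `X ← x`, values `y ∈ R(Y)` and `z ≠ z' ∈ R(Z)`, of
`[X ← x](Z = z) ∧ [X ← x; Y ← y](Z = z')`. -/
def IsLeadsTo (Y Z : S.V) (φ : CForm S) : Prop :=
  ∃ l : List (CForm S),
    (∀ ψ ∈ l, ∃ (I : S.V → Option S.Val) (hI : I ∈ S.Int) (y : S.Val)
        (_ : y ∈ S.RV Y) (hIY : updInt I Y y ∈ S.Int) (z z' : S.Val)
        (hz : z ∈ S.RV Z) (hz' : z' ∈ S.RV Z), z ≠ z' ∧
        ψ = ltComp I hI Y y hIY Z z z' hz hz') ∧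
    (∀ (I : S.V → Option S.Val) (hI : I ∈ S.Int) (y : S.Val), y ∈ S.RV Y →
      ∀ (hIY : updInt I Y y ∈ S.Int) (z z' : S.Val) (hz : z ∈ S.RV Z)
        (hz' : z' ∈ S.RV Z), z ≠ z' →
        ltComp I hI Y y hIY Z z z' hz hz' ∈ l) ∧
    φ = CForm.bigOr l

/-- D6 (recursiveness): `(X₀ ⇝ X₁ ∧ … ∧ X_{k−1} ⇝ X_k) ⇒ ¬(X_k ⇝ X₀)`. -/
def AxD6 (S : Signature) : Set (CForm S) :=
  {φ | ∃ (k : ℕ) (Xs : Fin (k+1) → S.V) (fs : Fin k → CForm S) (g : CForm S),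
    (∀ i : Fin k, IsLeadsTo (Xs i.castSucc) (Xs i.succ) (fs i)) ∧
    IsLeadsTo (Xs (Fin.last k)) (Xs 0) g ∧
    φ = CForm.imp (CForm.bigAnd (List.ofFn fs)) (CForm.not g)}

/-- D7 (distribution): `([X ← x]φ ∧ [X ← x](φ ⇒ ψ)) ⇒ [X ← x]ψ`. -/
def AxD7 (S : Signature) : Set (CForm S) :=
  {φ | ∃ (I : S.V → Option S.Val) (hI : I ∈ S.Int) (a b : Event S),
    φ = CForm.imp (CForm.and (CForm.box I hI a) (CForm.box I hI (Event.imp a b)))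
          (CForm.box I hI b)}

/-- D8 (generalization): `[X ← x]φ` for `φ` a propositional tautology. -/
def AxD8 (S : Signature) : Set (CForm S) :=
  {φ | ∃ (I : S.V → Option S.Val) (hI : I ∈ S.Int) (e : Event S), e.Taut ∧
    φ = CForm.box I hI e}

/-- D9 (unique outcomes for `V − {X}`): `⟨Y ← y⟩true ∧ (⟨Y ← y⟩φ ⇒ [Y ← y]φ)`
for `Y = V − {X}`. -/
def AxD9 (S : Signature) : Set (CForm S) :=
  {φ | ∃ (I : S.V → Option S.Val) (hI : I ∈ S.Int) (X : S.V) (e : Event S),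
    I X = none ∧ (∀ Z, Z ≠ X → I Z ≠ none) ∧
    φ = CForm.and (CForm.dia I hI Event.tru)
          (CForm.imp (CForm.dia I hI e) (CForm.box I hI e))}

/-- Halpern's version of D9: `⟨Y ← y⟩true ∧ ⋁_{x ∈ R(X)} [Y ← y](X = x)`
for `Y = V − {X}`. -/
def AxHD9 (S : Signature) : Set (CForm S) :=
  {φ | ∃ (I : S.V → Option S.Val) (hI : I ∈ S.Int) (X : S.V)
      (l : List {x : S.Val // x ∈ S.RV X}),
    I X = none ∧ (∀ Z, Z ≠ X → I Z ≠ none) ∧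
    (∀ x : {x : S.Val // x ∈ S.RV X}, x ∈ l) ∧
    φ = CForm.and (CForm.dia I hI Event.tru)
          (CForm.bigOr (l.map fun x => CForm.box I hI (Event.prim X x.1 x.2)))}

/-- D10(a) (at least one outcome): `⟨Y ← y⟩true`. -/
def AxD10a (S : Signature) : Set (CForm S) :=
  {φ | ∃ (I : S.V → Option S.Val) (hI : I ∈ S.Int), φ = CForm.dia I hI Event.tru}

/-- D10(b) (at most one outcome): `⟨Y ← y⟩φ ⇒ [Y ← y]φ`. -/
def AxD10b (S : Signature) : Set (CForm S) :=
  {φ | ∃ (I : S.V → Option S.Val) (hI : I ∈ S.Int) (e : Event S),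
    φ = CForm.imp (CForm.dia I hI e) (CForm.box I hI e)}

/-! ### The axiom schema D6⁺ -/

/-- `X_{-i} = ȳ` : the conjunction of `X_j = g j` over the indices `j ≠ i`. -/
def Event.conjEqVec {k : ℕ} (Xs : Fin k → S.V)
    (g : ∀ j : Fin k, {x : S.Val // x ∈ S.RV (Xs j)}) (i : Fin k) : Event S :=
  Event.bigAnd (((List.finRange k).filter (fun j => j ≠ i)).map
    fun j => Event.prim (Xs j) (g j).1 (g j).2)

/-- A disjunct of the formula `X_i ⇝_{I',U₁,…,U_k,X₁,…,X_k} X_{−i}`: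
`[I; X_i ← x](X_{−i} = ȳ) ∧ [I; X_i ← x'](X_{−i} ≠ ȳ)`. -/
noncomputable def affComp {k : ℕ} (Xs : Fin k → S.V) (i : Fin k) (I : S.V → Option S.Val)
    (x x' : {v : S.Val // v ∈ S.RV (Xs i)})
    (hx : updInt I (Xs i) x.1 ∈ S.Int) (hx' : updInt I (Xs i) x'.1 ∈ S.Int)
    (g : ∀ j : Fin k, {v : S.Val // v ∈ S.RV (Xs j)}) : CForm S :=
  CForm.and (CForm.box (updInt I (Xs i) x.1) hx (Event.conjEqVec Xs g i))
    (CForm.box (updInt I (Xs i) x'.1) hx' (Event.not (Event.conjEqVec Xs g i)))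

/-- `φ` is (an instance of) the formula `X_i ⇝_{I',U₁,…,U_k,X₁,…,X_k} X_{−i}`. -/
def IsAffects {k : ℕ} (Xs : Fin k → S.V) (Us : Fin k → Set S.Val)
    (Is : Set (S.V → Option S.Val)) (i : Fin k) (φ : CForm S) : Prop :=
  ∃ l : List (CForm S),
    (∀ ψ ∈ l, ∃ (I : S.V → Option S.Val) (x x' : {v : S.Val // v ∈ S.RV (Xs i)})
        (hx : updInt I (Xs i) x.1 ∈ S.Int) (hx' : updInt I (Xs i) x'.1 ∈ S.Int)
        (g : ∀ j : Fin k, {v : S.Val // v ∈ S.RV (Xs j)}),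
        I ∈ Is ∧ x.1 ∈ Us i ∧ x'.1 ∈ Us i ∧ (∀ j, j ≠ i → (g j).1 ∈ Us j) ∧
        ψ = affComp Xs i I x x' hx hx' g) ∧
    (∀ (I : S.V → Option S.Val), I ∈ Is →
      ∀ (x x' : {v : S.Val // v ∈ S.RV (Xs i)})
        (hx : updInt I (Xs i) x.1 ∈ S.Int) (hx' : updInt I (Xs i) x'.1 ∈ S.Int)
        (g : ∀ j : Fin k, {v : S.Val // v ∈ S.RV (Xs j)}),
        x.1 ∈ Us i → x'.1 ∈ Us i → (∀ j, j ≠ i → (g j).1 ∈ Us j) →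
        affComp Xs i I x x' hx hx' g ∈ l) ∧
    φ = CForm.bigOr l

/-- D6⁺: `⋁_{i=1}^k ¬(X_i ⇝_{I',U₁,…,U_k,X₁,…,X_k} X_{−i})`, one instance for
each finite choice of variables `X₁,…,X_k`, finite value sets `U_i ⊆ R(X_i)`,
and finite set `I'` of allowed interventions. -/
def AxD6p (S : Signature) : Set (CForm S) :=
  {φ | ∃ (k : ℕ) (Xs : Fin k → S.V) (Us : Fin k → Set S.Val)
      (Is : Set (S.V → Option S.Val)) (fs : Fin k → CForm S),
    (∀ j, Us j ⊆ S.RV (Xs j)) ∧ (∀ j, (Us j).Finite) ∧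
    Is ⊆ S.Int ∧ Is.Finite ∧
    (∀ i, IsAffects Xs Us Is i (fs i)) ∧
    φ = CForm.bigOr (List.ofFn fun i => CForm.not (fs i))}

/-! ### Axiom systems and provability -/

def AXplus (S : Signature) : Set (CForm S) :=
  AxD0 S ∪ AxD1 S ∪ AxD2 S ∪ AxD3 S ∪ AxD4 S ∪ AxD5 S ∪ AxD7 S ∪ AxD8 S ∪ AxD9 S

def AXplusRec (S : Signature) : Set (CForm S) :=
  AxD0 S ∪ AxD1 S ∪ AxD2 S ∪ AxD3 S ∪ AxD4 S ∪ AxD6 S ∪ AxD7 S ∪ AxD8 S ∪ AxD9 S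
    ∪ AxD10a S ∪ AxD10b S

def AXbasic (S : Signature) : Set (CForm S) :=
  AxD0 S ∪ AxD1 S ∪ AxD2 S ∪ AxD4 S ∪ AxD7 S ∪ AxD8 S

def AXbasicRec (S : Signature) : Set (CForm S) := AXbasic S ∪ AxD6p S

def AXminus (S : Signature) : Set (CForm S) :=
  AxD0 S ∪ AxD2 S ∪ AxD3 S ∪ AxD6 S ∪ AxD7 S ∪ AxD8 S ∪ AxD10a S ∪ AxD10b S

def AXEQ (S : Signature) : Set (CForm S) :=
  AxD0 S ∪ AxD1 S ∪ AxD2 S ∪ AxD7 S ∪ AxD8 S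

/-- Provability from a set of axioms, with modus ponens. -/
inductive Provable (Ax : Set (CForm S)) : CForm S → Prop
  | ax {φ} : φ ∈ Ax → Provable Ax φ
  | mp {φ ψ} : Provable Ax (CForm.imp φ ψ) → Provable Ax φ → Provable Ax ψ

/-- Provability from a set of axioms, with modus ponens and the inference rule
D2⁺, relative to named variables `W`, named values `R'`, and a language `L`. -/
inductive ProvableStar (Ax : Set (CForm S)) (W : Set S.V) (R' : S.V → Set S.Val)
    (L : Set (CForm S)) : CForm S → Prop
  | ax {φ} : φ ∈ Ax → ProvableStar Ax W R' L φ
  | mp {φ ψ} : ProvableStar Ax W R' L (CForm.imp φ ψ) → ProvableStar Ax W R' L φ →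
      ProvableStar Ax W R' L ψ
  | d2plus {φ : CForm S} {I : S.V → Option S.Val} {hI : I ∈ S.Int} {ψ : Event S}
      {X : S.V} (hXW : X ∈ W)
      (l : List {x : S.Val // x ∈ S.RV X})
      (hsub : ∀ x ∈ l, x.1 ∈ R' X)
      (hmem : ∀ (x : S.Val) (hx : x ∈ S.RV X),
        (CForm.imp φ (CForm.box I hI ψ)).mentionsVal X x →
        (⟨x, hx⟩ : {x : S.Val // x ∈ S.RV X}) ∈ l)
      (hfresh : (∃ x ∈ R' X, ¬ (CForm.imp φ (CForm.box I hI ψ)).mentionsVal X x) →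
        ∃ x ∈ l, ¬ (CForm.imp φ (CForm.box I hI ψ)).mentionsVal X x.1)
      (hL : CForm.imp φ (CForm.box I hI (Event.not ψ)) ∈ L)
      (hprem : ProvableStar Ax W R' L
        (CForm.imp φ (CForm.bigAnd (l.map fun x =>
          CForm.box I hI (Event.imp ψ (Event.not (Event.prim X x.1 x.2)))))))
      : ProvableStar Ax W R' L (CForm.imp φ (CForm.box I hI (Event.not ψ)))

/-! ### Properties of GSEMs -/

/-- Coherence: if `v` is an outcome of `X ← x` and `v` agrees with a finite
extension `X ← x; Y ← y` of the intervention, then `v` is an outcome of the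
extended intervention. -/
def GSEM.Coherent (M : GSEM S) : Prop :=
  ∀ (I₁ : S.V → Option S.Val) (h₁ : I₁ ∈ S.Int) (I₂ : S.V → Option S.Val)
    (h₂ : I₂ ∈ S.Int),
    (∀ X x, I₁ X = some x → I₂ X = some x) →
    {X | I₁ X = none ∧ I₂ X ≠ none}.Finite →
    ∀ (u : Context S) (v : Assignment S), v ∈ M.F I₁ h₁ u →
      (∀ X x, I₂ X = some x → v.1 X = x) → v ∈ M.F I₂ h₂ u

/-- Condition Acyc1 for a GSEM, a context, and a strict order on the variables. -/
def GSEM.Acyc1At (M : GSEM S) (u : Context S) (lt : S.V → S.V → Prop) : Prop :=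
  ∀ (X : S.V) (x x' : S.Val), x ∈ S.RV X → x' ∈ S.RV X →
    ∀ (I : S.V → Option S.Val), I ∈ S.Int →
      ∀ (hx : updInt I X x ∈ S.Int) (hx' : updInt I X x' ∈ S.Int),
        restrictSet (M.F (updInt I X x) hx u) {Y | lt Y X}
          = restrictSet (M.F (updInt I X x') hx' u) {Y | lt Y X}

/-- An acyclic GSEM: for each context there is a total order on the endogenous
variables satisfying Acyc1. -/
def GSEM.Acyclic (M : GSEM S) : Prop :=
  ∀ u : Context S, ∃ lt : S.V → S.V → Prop, IsStrictTotalOrder S.V lt ∧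
    M.Acyc1At u lt

/-! ### Consistency and acceptability -/

/-- A set of formulas is consistent with a provability notion `Pr` if the
negation of the conjunction of no finite subset is provable. -/
def Consistent (Pr : CForm S → Prop) (C : Set (CForm S)) : Prop :=
  ∀ l : List (CForm S), (∀ ψ ∈ l, ψ ∈ C) → ¬ Pr (CForm.not (CForm.bigAnd l))

def MaxConsistent (Pr : CForm S → Prop) (C : Set (CForm S)) : Prop :=
  Consistent Pr C ∧ ∀ ψ ∉ C, ¬ Consistent Pr (insert ψ C)

/-- `C` is acceptable for `⟨Y ← y⟩φ` with respect to `Z`: some conjunctive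
formula `ψ` extends the conjuncts of `φ`, contains a conjunct `Z = z` with `z`
a named value, and `⟨Y ← y⟩ψ ∈ C`. -/
def AcceptableFor (C : Set (CForm S)) (I : S.V → Option S.Val) (hI : I ∈ S.Int)
    (φ : Event S) (R' : S.V → Set S.Val) (Z : S.V) : Prop :=
  ∃ ψ : Event S, ψ.Conjunctive ∧ φ.conjuncts ⊆ ψ.conjuncts ∧
    (∃ (z : S.Val) (hz : z ∈ S.RV Z), z ∈ R' Z ∧ Event.prim Z z hz ∈ ψ.conjuncts) ∧
    CForm.dia I hI ψ ∈ C

end Causal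

namespace Causal


/-! ### Auxiliary machinery for Statement 11 -/

section D2plusAux

variable {S : Signature}

open Classical

lemma memD0 {χ : CForm S} (h : χ ∈ AxD0 S) : χ ∈ AXbasic S :=
  Or.inl (Or.inl (Or.inl (Or.inl (Or.inl h))))
lemma memD1 {χ : CForm S} (h : χ ∈ AxD1 S) : χ ∈ AXbasic S :=
  Or.inl (Or.inl (Or.inl (Or.inl (Or.inr h))))
lemma memD2 {χ : CForm S} (h : χ ∈ AxD2 S) : χ ∈ AXbasic S :=
  Or.inl (Or.inl (Or.inl (Or.inr h)))
lemma memD4 {χ : CForm S} (h : χ ∈ AxD4 S) : χ ∈ AXbasic S :=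
  Or.inl (Or.inl (Or.inr h))
lemma memD7 {χ : CForm S} (h : χ ∈ AxD7 S) : χ ∈ AXbasic S :=
  Or.inl (Or.inr h)
lemma memD8 {χ : CForm S} (h : χ ∈ AxD8 S) : χ ∈ AXbasic S := Or.inr h

lemma prov_taut {χ : CForm S} (h : χ.Taut) : Provable (AXbasic S) χ :=
  Provable.ax (memD0 h)

lemma evC_bigAnd (val : (S.V → Option S.Val) → Event S → Bool) (L : List (CForm S)) :
    CForm.evalB val (CForm.bigAnd L) = L.all (CForm.evalB val) := by
  induction L with
  | nil => rfl
  | cons a L ih =>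
    show CForm.evalB val (CForm.and a (CForm.bigAnd L)) = _
    simp [CForm.evalB, ih]

lemma evE_bigAnd (val : S.V → S.Val → Bool) (L : List (Event S)) :
    Event.evalB val (Event.bigAnd L) = L.all (Event.evalB val) := by
  induction L with
  | nil => rfl
  | cons a L ih =>
    show Event.evalB val (Event.and a (Event.bigAnd L)) = _
    simp [Event.evalB, ih]

lemma evE_bigOr (val : S.V → S.Val → Bool) (L : List (Event S)) :
    Event.evalB val (Event.bigOr L) = L.any (Event.evalB val) := by
  induction L with
  | nil => simp [Event.bigOr, Event.evalB]
  | cons a L ih =>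
    show Event.evalB val (Event.or a (Event.bigOr L)) = _
    simp [Event.evalB, ih]

lemma taut_proj {A c : CForm S} {L : List (CForm S)} (h : c ∈ L) :
    CForm.Taut (CForm.imp (CForm.imp A (CForm.bigAnd L)) (CForm.imp A c)) := by
  intro val
  cases hA : CForm.evalB val A with
  | false => simp [CForm.imp, CForm.evalB, hA]
  | true =>
    cases hL : CForm.evalB val (CForm.bigAnd L) with
    | false => simp [CForm.imp, CForm.evalB, hA, hL]
    | true =>
      have : CForm.evalB val c = true := by
        rw [evC_bigAnd] at hL
        exact List.all_eq_true.mp hL c h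
      simp [CForm.imp, CForm.evalB, hA, hL, this]

lemma taut_K (A P : CForm S) : CForm.Taut (CForm.imp P (CForm.imp A P)) := by
  intro val
  cases hA : CForm.evalB val A <;> cases hP : CForm.evalB val P <;>
    simp [CForm.imp, CForm.evalB, hA, hP]

lemma taut_glue1 (A P Q R : CForm S) :
    CForm.Taut (CForm.imp (CForm.imp A P) (CForm.imp Q
      (CForm.imp (CForm.imp (CForm.and P Q) R) (CForm.imp A R)))) := by
  intro val
  cases hA : CForm.evalB val A <;> cases hP : CForm.evalB val P <;>
    cases hQ : CForm.evalB val Q <;> cases hR : CForm.evalB val R <;>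
    simp [CForm.imp, CForm.evalB, hA, hP, hQ, hR]

lemma taut_glue2 (A P T Q R U : CForm S) :
    CForm.Taut (CForm.imp (CForm.imp A P) (CForm.imp (CForm.imp A T) (CForm.imp Q
      (CForm.imp (CForm.imp (CForm.and P Q) R)
        (CForm.imp (CForm.imp (CForm.and T R) U) (CForm.imp A U)))))) := by
  intro val
  cases hA : CForm.evalB val A <;> cases hP : CForm.evalB val P <;>
    cases hT : CForm.evalB val T <;> cases hQ : CForm.evalB val Q <;>
    cases hR : CForm.evalB val R <;> cases hU : CForm.evalB val U <;>
    simp [CForm.imp, CForm.evalB, hA, hP, hT, hQ, hR, hU]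

lemma prov_boxMP {φ : CForm S} {I : S.V → Option S.Val} {hI : I ∈ S.Int} {a b : Event S}
    (h : Provable (AXbasic S) (CForm.imp φ (CForm.box I hI a)))
    (t : Event.Taut (Event.imp a b)) :
    Provable (AXbasic S) (CForm.imp φ (CForm.box I hI b)) := by
  have h2 : Provable (AXbasic S) (CForm.box I hI (Event.imp a b)) :=
    Provable.ax (memD8 ⟨I, hI, _, t, rfl⟩)
  have h3 : Provable (AXbasic S) (CForm.imp (CForm.and (CForm.box I hI a)
      (CForm.box I hI (Event.imp a b))) (CForm.box I hI b)) :=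
    Provable.ax (memD7 ⟨I, hI, a, b, rfl⟩)
  exact Provable.mp (Provable.mp (Provable.mp (prov_taut
    (taut_glue1 φ (CForm.box I hI a) (CForm.box I hI (Event.imp a b)) (CForm.box I hI b)))
    h) h2) h3

lemma prov_boxAnd {φ : CForm S} {I : S.V → Option S.Val} {hI : I ∈ S.Int} {a b : Event S}
    (ha : Provable (AXbasic S) (CForm.imp φ (CForm.box I hI a)))
    (hb : Provable (AXbasic S) (CForm.imp φ (CForm.box I hI b))) :
    Provable (AXbasic S) (CForm.imp φ (CForm.box I hI (Event.and a b))) := by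
  have t : Event.Taut (Event.imp a (Event.imp b (Event.and a b))) := by
    intro val
    cases h1 : Event.evalB val a <;> cases h2 : Event.evalB val b <;>
      simp [Event.imp, Event.evalB, h1, h2]
  have h2 : Provable (AXbasic S) (CForm.box I hI (Event.imp a (Event.imp b (Event.and a b)))) :=
    Provable.ax (memD8 ⟨I, hI, _, t, rfl⟩)
  have h3 : Provable (AXbasic S) (CForm.imp (CForm.and (CForm.box I hI a)
      (CForm.box I hI (Event.imp a (Event.imp b (Event.and a b)))))
      (CForm.box I hI (Event.imp b (Event.and a b)))) :=
    Provable.ax (memD7 ⟨I, hI, a, Event.imp b (Event.and a b), rfl⟩)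
  have h4 : Provable (AXbasic S) (CForm.imp (CForm.and (CForm.box I hI b)
      (CForm.box I hI (Event.imp b (Event.and a b)))) (CForm.box I hI (Event.and a b))) :=
    Provable.ax (memD7 ⟨I, hI, b, Event.and a b, rfl⟩)
  exact Provable.mp (Provable.mp (Provable.mp (Provable.mp (Provable.mp (prov_taut
    (taut_glue2 φ (CForm.box I hI a) (CForm.box I hI b)
      (CForm.box I hI (Event.imp a (Event.imp b (Event.and a b))))
      (CForm.box I hI (Event.imp b (Event.and a b)))
      (CForm.box I hI (Event.and a b)))) ha) hb) h2) h3) h4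

/-! #### Value swapping -/

noncomputable def swv {α : Type} (x₀ x' v : α) : α :=
  if v = x₀ then x' else if v = x' then x₀ else v

lemma swv_mem {X : S.V} {x₀ x' : S.Val} (h₀ : x₀ ∈ S.RV X) (h' : x' ∈ S.RV X)
    {v : S.Val} (hv : v ∈ S.RV X) : swv x₀ x' v ∈ S.RV X := by
  unfold swv; split_ifs <;> assumption

lemma swv_swv {α : Type} (x₀ x' v : α) : swv x₀ x' (swv x₀ x' v) = v := by
  unfold swv; split_ifs <;> simp_all

lemma swv_left {α : Type} (x₀ x' : α) : swv x₀ x' x₀ = x' := by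
  unfold swv; simp

lemma swv_id {α : Type} {x₀ x' v : α} (h0 : v ≠ x₀) (h1 : v ≠ x') : swv x₀ x' v = v := by
  unfold swv; simp [h0, h1]

lemma swv_inj {α : Type} {x₀ x' a b : α} (h : swv x₀ x' a = swv x₀ x' b) : a = b := by
  rw [← swv_swv x₀ x' a, h, swv_swv]

noncomputable def swE (X : S.V) (x₀ x' : S.Val) (h₀ : x₀ ∈ S.RV X) (h' : x' ∈ S.RV X) :
    Event S → Event S
  | .tru => .tru
  | .prim X'' v h =>
      if hX : X'' = X then .prim X (swv x₀ x' v) (swv_mem h₀ h' (hX ▸ h))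
      else .prim X'' v h
  | .not e => .not (swE X x₀ x' h₀ h' e)
  | .and a b => .and (swE X x₀ x' h₀ h' a) (swE X x₀ x' h₀ h' b)
  | .or a b => .or (swE X x₀ x' h₀ h' a) (swE X x₀ x' h₀ h' b)

def touched (X : S.V) (x₀ x' : S.Val) (J : S.V → Option S.Val) : Prop :=
  J X = some x₀ ∨ J X = some x'

noncomputable def swC (X : S.V) (x₀ x' : S.Val) (h₀ : x₀ ∈ S.RV X) (h' : x' ∈ S.RV X) :
    CForm S → CForm S
  | .tru => .tru
  | .box J hJ e => .box J hJ (if touched X x₀ x' J then e else swE X x₀ x' h₀ h' e)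
  | .not a => .not (swC X x₀ x' h₀ h' a)
  | .and a b => .and (swC X x₀ x' h₀ h' a) (swC X x₀ x' h₀ h' b)
  | .or a b => .or (swC X x₀ x' h₀ h' a) (swC X x₀ x' h₀ h' b)

variable {X : S.V} {x₀ x' : S.Val} (h₀ : x₀ ∈ S.RV X) (h' : x' ∈ S.RV X)

lemma prim_congr {Y : S.V} {v w : S.Val} (hvw : v = w) (hv : v ∈ S.RV Y) (hw : w ∈ S.RV Y) :
    Event.prim Y v hv = Event.prim Y w hw := by subst hvw; rfl

lemma swE_prim_self (v : S.Val) (h : v ∈ S.RV X) :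
    swE X x₀ x' h₀ h' (Event.prim X v h)
      = Event.prim X (swv x₀ x' v) (swv_mem h₀ h' h) := by
  simp [swE]

lemma swE_prim_ne {X₁ : S.V} (hne : X₁ ≠ X) (v : S.Val) (h : v ∈ S.RV X₁) :
    swE X x₀ x' h₀ h' (Event.prim X₁ v h) = Event.prim X₁ v h := by
  simp [swE, hne]

lemma swE_not (e : Event S) :
    swE X x₀ x' h₀ h' (Event.not e) = Event.not (swE X x₀ x' h₀ h' e) := rfl

lemma swE_imp (a b : Event S) :
    swE X x₀ x' h₀ h' (Event.imp a b)
      = Event.imp (swE X x₀ x' h₀ h' a) (swE X x₀ x' h₀ h' b) := rfl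

lemma swC_imp (a b : CForm S) :
    swC X x₀ x' h₀ h' (CForm.imp a b)
      = CForm.imp (swC X x₀ x' h₀ h' a) (swC X x₀ x' h₀ h' b) := rfl

lemma swE_bigOr (L : List (Event S)) :
    swE X x₀ x' h₀ h' (Event.bigOr L) = Event.bigOr (L.map (swE X x₀ x' h₀ h')) := by
  induction L with
  | nil => rfl
  | cons a L ih =>
    show Event.or (swE X x₀ x' h₀ h' a) (swE X x₀ x' h₀ h' (Event.bigOr L))
      = Event.or (swE X x₀ x' h₀ h' a) (Event.bigOr (List.map (swE X x₀ x' h₀ h') L))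
    rw [ih]

lemma evC_swC (val : (S.V → Option S.Val) → Event S → Bool) (χ : CForm S) :
    CForm.evalB val (swC X x₀ x' h₀ h' χ)
      = CForm.evalB (fun J e => val J (if touched X x₀ x' J then e
          else swE X x₀ x' h₀ h' e)) χ := by
  induction χ with
  | tru => rfl
  | box J hJ e => rfl
  | not a ih => simp [swC, CForm.evalB, ih]
  | and a b iha ihb => simp [swC, CForm.evalB, iha, ihb]
  | or a b iha ihb => simp [swC, CForm.evalB, iha, ihb]

lemma evE_swE (val : S.V → S.Val → Bool) (e : Event S) :
    Event.evalB val (swE X x₀ x' h₀ h' e)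
      = Event.evalB (fun X'' v => if X'' = X then val X (swv x₀ x' v) else val X'' v) e := by
  induction e with
  | tru => rfl
  | prim X'' v h =>
    by_cases hX : X'' = X
    · subst hX
      rw [swE_prim_self]
      simp [Event.evalB]
    · rw [swE_prim_ne h₀ h' hX]
      simp [Event.evalB, hX]
  | not e ih => simp [swE, Event.evalB, ih]
  | and a b iha ihb => simp [swE, Event.evalB, iha, ihb]
  | or a b iha ihb => simp [swE, Event.evalB, iha, ihb]

lemma taut_swE {e : Event S} (h : e.Taut) : (swE X x₀ x' h₀ h' e).Taut := by
  intro val; rw [evE_swE]; exact h _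

lemma taut_swC {χ : CForm S} (h : χ.Taut) : (swC X x₀ x' h₀ h' χ).Taut := by
  intro val; rw [evC_swC]; exact h _

lemma swE_id {e : Event S} (m0 : ¬ e.mentionsVal X x₀) (m1 : ¬ e.mentionsVal X x') :
    swE X x₀ x' h₀ h' e = e := by
  induction e with
  | tru => rfl
  | prim X'' v h =>
    by_cases hX : X'' = X
    · subst hX
      have hv0 : v ≠ x₀ := fun he => m0 ⟨rfl, he⟩
      have hv1 : v ≠ x' := fun he => m1 ⟨rfl, he⟩
      rw [swE_prim_self]
      exact prim_congr (swv_id hv0 hv1) _ _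
    · exact swE_prim_ne h₀ h' hX v h
  | not e ih =>
    simp only [Event.mentionsVal] at m0 m1
    simp [swE, ih m0 m1]
  | and a b iha ihb =>
    simp only [Event.mentionsVal] at m0 m1
    push_neg at m0 m1
    simp [swE, iha m0.1 m1.1, ihb m0.2 m1.2]
  | or a b iha ihb =>
    simp only [Event.mentionsVal] at m0 m1
    push_neg at m0 m1
    simp [swE, iha m0.1 m1.1, ihb m0.2 m1.2]

lemma swC_id {χ : CForm S} (m0 : ¬ χ.mentionsVal X x₀) (m1 : ¬ χ.mentionsVal X x') :
    swC X x₀ x' h₀ h' χ = χ := by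
  induction χ with
  | tru => rfl
  | box J hJ e =>
    simp only [CForm.mentionsVal] at m0 m1
    push_neg at m0 m1
    have ht : ¬ touched X x₀ x' J := by rintro (h | h) <;> [exact m0.1 h; exact m1.1 h]
    simp [swC, ht, swE_id h₀ h' m0.2 m1.2]
  | not a ih =>
    simp only [CForm.mentionsVal] at m0 m1
    simp [swC, ih m0 m1]
  | and a b iha ihb =>
    simp only [CForm.mentionsVal] at m0 m1
    push_neg at m0 m1
    simp [swC, iha m0.1 m1.1, ihb m0.2 m1.2]
  | or a b iha ihb =>
    simp only [CForm.mentionsVal] at m0 m1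
    push_neg at m0 m1
    simp [swC, iha m0.1 m1.1, ihb m0.2 m1.2]

lemma swC_ax {χ : CForm S} (h : χ ∈ AXbasic S) :
    swC X x₀ x' h₀ h' χ ∈ AXbasic S := by
  rcases h with ((((h | h) | h) | h) | h) | h
  · exact memD0 (taut_swC h₀ h' h)
  · -- D1
    obtain ⟨J, hJ, X₁, a, b, ha, hb, hab, rfl⟩ := h
    by_cases ht : touched X x₀ x' J
    · exact memD1 ⟨J, hJ, X₁, a, b, ha, hb, hab, by simp [swC, ht]⟩
    · by_cases hX : X₁ = X
      · subst hX
        refine memD1 ⟨J, hJ, X₁, swv x₀ x' a, swv x₀ x' b, swv_mem h₀ h' ha,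
          swv_mem h₀ h' hb, fun he => hab (swv_inj he), ?_⟩
        simp only [swC, if_neg ht, swE_imp, swE_not, swE_prim_self]
      · refine memD1 ⟨J, hJ, X₁, a, b, ha, hb, hab, ?_⟩
        simp only [swC, if_neg ht, swE_imp, swE_not, swE_prim_ne h₀ h' hX]
  · -- D2
    obtain ⟨J, hJ, X₁, L, hcomp, rfl⟩ := h
    by_cases ht : touched X x₀ x' J
    · exact memD2 ⟨J, hJ, X₁, L, hcomp, by simp [swC, ht]⟩
    · by_cases hX : X₁ = X
      · subst hX
        refine memD2 ⟨J, hJ, X₁,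
          L.map (fun x => ⟨swv x₀ x' x.1, swv_mem h₀ h' x.2⟩), ?_, ?_⟩
        · rintro ⟨v, hv⟩
          refine List.mem_map.mpr ⟨⟨swv x₀ x' v, swv_mem h₀ h' hv⟩, hcomp _, ?_⟩
          exact Subtype.ext (swv_swv x₀ x' v)
        · simp only [swC, if_neg ht]
          congr 1
          simp only [Event.disjEq, swE_bigOr h₀ h', List.map_map]
          refine congrArg Event.bigOr (List.map_congr_left (fun x _ => ?_))
          exact swE_prim_self h₀ h' x.1 x.2
      · refine memD2 ⟨J, hJ, X₁, L, hcomp, ?_⟩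
        simp only [swC, if_neg ht]
        congr 1
        simp only [Event.disjEq, swE_bigOr h₀ h', List.map_map]
        refine congrArg Event.bigOr (List.map_congr_left (fun x _ => ?_))
        exact swE_prim_ne h₀ h' hX x.1 x.2
  · -- D4
    obtain ⟨J, hJ, X₁, x, hx, hJx, rfl⟩ := h
    by_cases ht : touched X x₀ x' J
    · exact memD4 ⟨J, hJ, X₁, x, hx, hJx, by simp [swC, ht]⟩
    · by_cases hX : X₁ = X
      · subst hX
        have hx0 : x ≠ x₀ := fun he => ht (Or.inl (he ▸ hJx))
        have hx1 : x ≠ x' := fun he => ht (Or.inr (he ▸ hJx))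
        refine memD4 ⟨J, hJ, X₁, x, hx, hJx, ?_⟩
        simp only [swC, if_neg ht]
        rw [swE_prim_self]
        rw [prim_congr (swv_id hx0 hx1) _ hx]
      · refine memD4 ⟨J, hJ, X₁, x, hx, hJx, ?_⟩
        simp only [swC, if_neg ht]
        rw [swE_prim_ne h₀ h' hX]
  · -- D7
    obtain ⟨J, hJ, a, b, rfl⟩ := h
    by_cases ht : touched X x₀ x' J
    · exact memD7 ⟨J, hJ, a, b, by simp [swC, CForm.imp, ht]⟩
    · exact memD7 ⟨J, hJ, swE X x₀ x' h₀ h' a, swE X x₀ x' h₀ h' b,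
        by simp [swC, CForm.imp, ht, swE_imp]⟩
  · -- D8
    obtain ⟨J, hJ, e, te, rfl⟩ := h
    by_cases ht : touched X x₀ x' J
    · exact memD8 ⟨J, hJ, e, te, by simp [swC, ht]⟩
    · exact memD8 ⟨J, hJ, swE X x₀ x' h₀ h' e, taut_swE h₀ h' te, by simp [swC, ht]⟩

lemma swC_provable {χ : CForm S} (h : Provable (AXbasic S) χ) :
    Provable (AXbasic S) (swC X x₀ x' h₀ h' χ) := by
  induction h with
  | ax hχ => exact Provable.ax (swC_ax h₀ h' hχ)
  | mp h1 h2 ih1 ih2 =>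
    rw [swC_imp] at ih1
    exact Provable.mp ih1 ih2

end D2plusAux

/-- The rule D2⁺ is derivable in `AX⁺_basic` for variables
with finite range: if `R(X)` is finite, `l ⊆ R(X)` contains all values of `X`
mentioned in the formula `φ ⇒ [Y ← y]ψ` and some value of `R(X)` not mentioned
in that formula if such a value exists, and
`AX⁺_basic ⊢ φ ⇒ ⋀_{x ∈ l} [Y ← y](ψ ⇒ X ≠ x)`, then
`AX⁺_basic ⊢ φ ⇒ [Y ← y]¬ψ`. -/
theorem d2plus_derivable_in_axbasic (S : Signature)
    (φ : CForm S) (I : S.V → Option S.Val) (hI : I ∈ S.Int) (ψ : Event S)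
    (X : S.V) (hXfin : (S.RV X).Finite)
    (l : List {x : S.Val // x ∈ S.RV X})
    (hmem : ∀ (x : S.Val) (hx : x ∈ S.RV X),
      (CForm.imp φ (CForm.box I hI ψ)).mentionsVal X x →
      (⟨x, hx⟩ : {x : S.Val // x ∈ S.RV X}) ∈ l)
    (hfresh : (∃ x ∈ S.RV X, ¬ (CForm.imp φ (CForm.box I hI ψ)).mentionsVal X x) →
      ∃ x ∈ l, ¬ (CForm.imp φ (CForm.box I hI ψ)).mentionsVal X x.1)
    (hprem : Provable (AXbasic S)
      (CForm.imp φ (CForm.bigAnd (l.map fun x =>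
        CForm.box I hI (Event.imp ψ (Event.not (Event.prim X x.1 x.2))))))) :
    Provable (AXbasic S) (CForm.imp φ (CForm.box I hI (Event.not ψ))) := by
  classical
  have proj : ∀ x ∈ l, Provable (AXbasic S)
      (CForm.imp φ (CForm.box I hI (Event.imp ψ (Event.not (Event.prim X x.1 x.2))))) := by
    intro x hx
    have hc : CForm.box I hI (Event.imp ψ (Event.not (Event.prim X x.1 x.2)))
        ∈ l.map (fun x => CForm.box I hI (Event.imp ψ (Event.not (Event.prim X x.1 x.2)))) :=
      List.mem_map.mpr ⟨x, hx, rfl⟩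
    exact Provable.mp (prov_taut (taut_proj hc)) hprem
  have hMiff : ∀ c, (CForm.imp φ (CForm.box I hI ψ)).mentionsVal X c ↔
      (φ.mentionsVal X c ∨ I X = some c ∨ ψ.mentionsVal X c) := by
    intro c
    simp [CForm.imp, CForm.mentionsVal]
  have key : ∀ (x' : S.Val) (hx' : x' ∈ S.RV X), Provable (AXbasic S)
      (CForm.imp φ (CForm.box I hI (Event.imp ψ (Event.not (Event.prim X x' hx'))))) := by
    intro x' hx'
    by_cases hmem' : (⟨x', hx'⟩ : {x : S.Val // x ∈ S.RV X}) ∈ l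
    · exact proj _ hmem'
    · have hunm' : ¬ (CForm.imp φ (CForm.box I hI ψ)).mentionsVal X x' :=
        fun h => hmem' (hmem x' hx' h)
      obtain ⟨x₀, hx₀l, hx₀unm⟩ := hfresh ⟨x', hx', hunm'⟩
      have h1 := proj _ hx₀l
      have h2 := swC_provable (X := X) (x₀ := x₀.1) (x' := x') x₀.2 hx' h1
      have hu0 := hx₀unm
      have hu1 := hunm'
      rw [hMiff] at hu0 hu1
      push_neg at hu0 hu1
      have ht : ¬ touched X x₀.1 x' I := by
        rintro (h | h)
        exacts [hu0.2.1 h, hu1.2.1 h]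
      have e1 : swC X x₀.1 x' x₀.2 hx'
          (CForm.imp φ (CForm.box I hI (Event.imp ψ (Event.not (Event.prim X x₀.1 x₀.2)))))
          = CForm.imp φ (CForm.box I hI (Event.imp ψ (Event.not (Event.prim X x' hx')))) := by
        rw [swC_imp, swC_id x₀.2 hx' hu0.1 hu1.1]
        congr 1
        show CForm.box I hI _ = _
        simp only [swC, if_neg ht, swE_imp, swE_not, swE_prim_self]
        rw [swE_id x₀.2 hx' hu0.2.2 hu1.2.2]
        rw [prim_congr (swv_left x₀.1 x') _ hx']
      rw [e1] at h2
      exact h2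
  have hfin : Finite {x : S.Val // x ∈ S.RV X} := hXfin.to_subtype
  have hft : Fintype {x : S.Val // x ∈ S.RV X} := Fintype.ofFinite _
  set L : List {x : S.Val // x ∈ S.RV X} :=
    (Finset.univ : Finset {x : S.Val // x ∈ S.RV X}).toList with hLdef
  have hL : ∀ x, x ∈ L := fun x => by
    rw [hLdef]; exact Finset.mem_toList.mpr (Finset.mem_univ x)
  have conjAll : ∀ (L' : List {x : S.Val // x ∈ S.RV X}), Provable (AXbasic S)
      (CForm.imp φ (CForm.box I hI (Event.bigAnd (L'.map fun x =>
        Event.imp ψ (Event.not (Event.prim X x.1 x.2)))))) := by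
    intro L'
    induction L' with
    | nil =>
      have h1 : Provable (AXbasic S) (CForm.box I hI Event.tru) :=
        Provable.ax (memD8 ⟨I, hI, Event.tru, fun _ => rfl, rfl⟩)
      exact Provable.mp (prov_taut (taut_K φ _)) h1
    | cons x L' ih =>
      exact prov_boxAnd (key x.1 x.2) ih
  have hd2 : Provable (AXbasic S) (CForm.box I hI (Event.disjEq X L)) :=
    Provable.ax (memD2 ⟨I, hI, X, L, hL, rfl⟩)
  have hdisj : Provable (AXbasic S) (CForm.imp φ (CForm.box I hI (Event.disjEq X L))) :=
    Provable.mp (prov_taut (taut_K φ _)) hd2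
  have hboth := prov_boxAnd (conjAll L) hdisj
  refine prov_boxMP hboth ?_
  intro val
  by_cases hψ : Event.evalB val ψ = true
  · by_cases hc : Event.evalB val (Event.bigAnd (L.map fun x =>
        Event.imp ψ (Event.not (Event.prim X x.1 x.2)))) = true
    · have hvfalse : ∀ x ∈ L, val X x.1 = false := by
        intro x hx
        have hall := List.all_eq_true.mp ((evE_bigAnd val _).symm.trans hc) _
          (List.mem_map.mpr ⟨x, hx, rfl⟩)
        simpa [Event.imp, Event.evalB, hψ] using hall
      have hdf : Event.evalB val (Event.disjEq X L) = false := by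
        simp only [Event.disjEq]
        rw [evE_bigOr]
        by_contra h
        rw [Bool.not_eq_false, List.any_eq_true] at h
        obtain ⟨e, he, hev⟩ := h
        obtain ⟨x, hx, rfl⟩ := List.mem_map.mp he
        simp [Event.evalB, hvfalse x hx] at hev
      show (!(Event.evalB val (Event.bigAnd (L.map fun x =>
          Event.imp ψ (Event.not (Event.prim X x.1 x.2)))) &&
          Event.evalB val (Event.disjEq X L)) || !(Event.evalB val ψ)) = true
      rw [hdf]
      simp
    · rw [Bool.not_eq_true] at hc
      show (!(Event.evalB val (Event.bigAnd (L.map fun x =>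
          Event.imp ψ (Event.not (Event.prim X x.1 x.2)))) &&
          Event.evalB val (Event.disjEq X L)) || !(Event.evalB val ψ)) = true
      rw [hc]
      simp
  · rw [Bool.not_eq_true] at hψ
    show (!(Event.evalB val (Event.bigAnd (L.map fun x =>
        Event.imp ψ (Event.not (Event.prim X x.1 x.2)))) &&
        Event.evalB val (Event.disjEq X L)) || !(Event.evalB val ψ)) = true
    rw [hψ]
    simp

end Causal
end

section
/- If C is a finite subset of L_{W,R',I'}(S) consistent with AX*_{basic,A}(S, W, R', I'), ⟨Y ← y⟩φ ∈ C with φ a conjunctive formula, and X ∈ W, then there exists a formula ψ ∈ L_{W,R',I'}(S) not in C such that C ∪ {ψ} is consistent with AX*_{basic,A}(S, W, R', I') and is acceptable for ⟨Y ← y⟩φ with respect to X. -/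
namespace Causal

/-- The axiom set of `AX*_{basic,A}(S, W, R', I')`: the axioms of `AX⁺_basic`
together with the axiom schemas in `A ⊆ {D3, D6⁺, D10(a), D10(b)}`, all
restricted to the language `L_{W,R',I'}(S)`.  (The inference rules MP and D2⁺
are built into `ProvableStar`.) -/
def starAxioms (S : Signature) (W : Set S.V) (R' : S.V → Set S.Val)
    (I' : Set (S.V → Option S.Val)) (useD3 useD6p useD10a useD10b : Prop) :
    Set (CForm S) :=
  (AXbasic S ∪ {ψ | useD3 ∧ ψ ∈ AxD3 S} ∪ {ψ | useD6p ∧ ψ ∈ AxD6p S}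
      ∪ {ψ | useD10a ∧ ψ ∈ AxD10a S} ∪ {ψ | useD10b ∧ ψ ∈ AxD10b S})
    ∩ {ψ | ψ.InLang W R' I'}

/-!
Some named value `x` of `X` makes `C ∪ {⟨I⟩(φ ∧ X = x)}` consistent: otherwise `C` proves
`[I](φ ⇒ X ≠ x)` for every named `x`, and rule D2⁺ (applied with the finitely many values
mentioned, plus a fresh one) turns this into a proof of `[I]¬φ` from `C`, contradicting
`⟨I⟩φ ∈ C`. If `⟨I⟩(φ ∧ X = x)` is not yet in `C` it is the required formula; if it is, `C`
is already acceptable and any tautology of the language outside the finite set `C` will do.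
-/

variable {S : Signature}

namespace Event

theorem finite_mentionsVal (X : S.V) (e : Event S) : {x | e.mentionsVal X x}.Finite := by
  induction e with
  | tru => simp [mentionsVal]
  | prim Y y _ => exact (Set.finite_singleton y).subset fun x hx => hx.2.symm
  | not e ih => simpa [mentionsVal] using ih
  | and a b iha ihb | or a b iha ihb => simpa [mentionsVal, Set.ofPred_or] using iha.union ihb

theorem mem_of_mentionsVal {W : Set S.V} {R' : S.V → Set S.Val} {X : S.V} {x : S.Val}
    {e : Event S} (hL : e.InLang W R') (h : e.mentionsVal X x) : x ∈ R' X := by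
  induction e with
  | tru => exact h.elim
  | prim Y y _ => obtain ⟨rfl, rfl⟩ := h; exact hL.2
  | not e ih => exact ih hL h
  | and a b iha ihb | or a b iha ihb => exact h.elim (iha hL.1) (ihb hL.2)

end Event

namespace CForm

theorem evalB_bigAnd (val : (S.V → Option S.Val) → Event S → Bool) (l : List (CForm S)) :
    (bigAnd l).evalB val = true ↔ ∀ a ∈ l, a.evalB val = true := by
  induction l with
  | nil => simp [bigAnd, evalB]
  | cons a l ih => simp [bigAnd, evalB, ← ih]

theorem inLang_bigAnd {W : Set S.V} {R' : S.V → Set S.Val} {I' : Set (S.V → Option S.Val)}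
    (l : List (CForm S)) : (bigAnd l).InLang W R' I' ↔ ∀ a ∈ l, a.InLang W R' I' := by
  induction l with
  | nil => simp [bigAnd, InLang]
  | cons a l ih => simp [bigAnd, InLang, ← ih]

theorem finite_mentionsVal (X : S.V) (φ : CForm S) : {x | φ.mentionsVal X x}.Finite := by
  induction φ with
  | tru => simp [mentionsVal]
  | box I _ e =>
    have hI : {x | I X = some x}.Finite :=
      Set.Subsingleton.finite fun _ ha _ hb => Option.some_injective _ (ha.symm.trans hb)
    simpa [mentionsVal, Set.ofPred_or] using hI.union (e.finite_mentionsVal X)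
  | not φ ih => simpa [mentionsVal] using ih
  | and a b iha ihb | or a b iha ihb => simpa [mentionsVal, Set.ofPred_or] using iha.union ihb

theorem mem_of_mentionsVal {W : Set S.V} {R' : S.V → Set S.Val} {I' : Set (S.V → Option S.Val)}
    (hI'named : ∀ I ∈ I', ∀ X x, I X = some x → X ∈ W ∧ x ∈ R' X)
    {X : S.V} {x : S.Val} {φ : CForm S} (hL : φ.InLang W R' I') (h : φ.mentionsVal X x) :
    x ∈ R' X := by
  induction φ with
  | tru => exact h.elim
  | box I _ e => exact h.elim (fun h => (hI'named I hL.1 X x h).2) (Event.mem_of_mentionsVal hL.2)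
  | not φ ih => exact ih hL h
  | and a b iha ihb | or a b iha ihb => exact h.elim (iha hL.1) (ihb hL.2)

def trueTower : ℕ → CForm S
  | 0 => tru
  | n + 1 => and (trueTower n) tru

theorem trueTower_injective : Function.Injective (trueTower (S := S)) := by
  have hmono : StrictMono fun n => sizeOf (trueTower (S := S) n) :=
    strictMono_nat_of_lt_succ fun n => by simp [trueTower]
  exact hmono.injective.of_comp

theorem trueTower_taut (n : ℕ) : (trueTower n : CForm S).Taut := by
  induction n with
  | zero => intro val; rfl
  | succ n ih => intro val; simp [trueTower, evalB, ih val]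

theorem trueTower_inLang {W : Set S.V} {R' : S.V → Set S.Val} {I' : Set (S.V → Option S.Val)}
    (n : ℕ) : (trueTower n : CForm S).InLang W R' I' := by
  induction n with
  | zero => trivial
  | succ n ih => exact ⟨ih, trivial⟩

theorem exists_taut_inLang_not_mem {W : Set S.V} {R' : S.V → Set S.Val}
    {I' : Set (S.V → Option S.Val)} {C : Set (CForm S)} (hC : C.Finite) :
    ∃ ψ : CForm S, ψ.Taut ∧ ψ.InLang W R' I' ∧ ψ ∉ C := by
  obtain ⟨_, ⟨n, rfl⟩, hn⟩ :=
    (Set.infinite_range_of_injective trueTower_injective).exists_notMem_finite hC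
  exact ⟨trueTower n, trueTower_taut n, trueTower_inLang n, hn⟩

end CForm

theorem acceptableFor_of_dia_and_prim_mem {C : Set (CForm S)} {I : S.V → Option S.Val}
    {hI : I ∈ S.Int} {φ : Event S} (hφ : φ.Conjunctive) {R' : S.V → Set S.Val} {X : S.V}
    {x : S.Val} {hx : x ∈ S.RV X} (hxR : x ∈ R' X)
    (h : CForm.dia I hI (φ.and (.prim X x hx)) ∈ C) : AcceptableFor C I hI φ R' X :=
  ⟨_, hφ.and (.eq X x hx), Set.subset_union_left, ⟨x, hx, hxR, Set.mem_union_right _ rfl⟩, h⟩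

theorem exists_list_subtype_cover {α : Type*} {p : α → Prop} {M N : Set α} (hM : M.Finite)
    (hMN : M ⊆ N) (hN : ∀ x ∈ N, p x) :
    ∃ l : List {x // p x}, (∀ x ∈ l, x.1 ∈ N) ∧ (∀ x (hx : p x), x ∈ M → ⟨x, hx⟩ ∈ l) ∧
      ((∃ x ∈ N, x ∉ M) → ∃ x ∈ l, x.1 ∉ M) := by
  classical
  obtain ⟨T, hT, hMT, hTN, hfresh⟩ : ∃ T : Set α, T.Finite ∧ M ⊆ T ∧ T ⊆ N ∧
      ((∃ x ∈ N, x ∉ M) → ∃ x ∈ T, x ∉ M) := by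
    by_cases h : ∃ x ∈ N, x ∉ M
    · obtain ⟨x₀, hx₀N, hx₀M⟩ := h
      exact ⟨insert x₀ M, hM.insert x₀, Set.subset_insert x₀ M,
        Set.insert_subset hx₀N hMN, fun _ => ⟨x₀, Set.mem_insert x₀ M, hx₀M⟩⟩
    · exact ⟨M, hM, subset_rfl, hMN, fun h' => absurd h' h⟩
  refine ⟨(hT.toFinset.subtype p).toList, fun x hx => hTN ?_, fun x _ hxM => ?_, fun h => ?_⟩
  · simpa using hx
  · simpa using hMT hxM
  · obtain ⟨x, hxT, hxM⟩ := hfresh h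
    exact ⟨⟨x, hN x (hTN hxT)⟩, by simpa using hxT, hxM⟩

/-- Provability in `AX*_{basic,A}(S, W, R', I')`, where the propositions `u3 u6 ua ub` switch on
the optional schemas D3, D6⁺, D10(a), D10(b). -/
abbrev StarProvable (W : Set S.V) (R' : S.V → Set S.Val) (I' : Set (S.V → Option S.Val))
    (u3 u6 ua ub : Prop) : CForm S → Prop :=
  ProvableStar (starAxioms S W R' I' u3 u6 ua ub) W R' {ψ | ψ.InLang W R' I'}

namespace StarProvable

variable {W : Set S.V} {R' : S.V → Set S.Val} {I' : Set (S.V → Option S.Val)}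
  {u3 u6 ua ub : Prop}

theorem of_mem_AXbasic {φ : CForm S} (h : φ ∈ AXbasic S) (hL : φ.InLang W R' I') :
    StarProvable W R' I' u3 u6 ua ub φ :=
  .ax ⟨.inl (.inl (.inl (.inl h))), hL⟩

theorem of_taut {φ : CForm S} (ht : φ.Taut) (hL : φ.InLang W R' I') :
    StarProvable W R' I' u3 u6 ua ub φ :=
  of_mem_AXbasic (.inl (.inl (.inl (.inl (.inl ht))))) hL

theorem inLang {φ : CForm S} (h : StarProvable W R' I' u3 u6 ua ub φ) : φ.InLang W R' I' := by
  induction h with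
  | ax h => exact h.2
  | mp _ _ ih _ => exact ih.2
  | d2plus _ _ _ _ _ hL _ _ => exact hL

theorem of_entails {l : List (CForm S)} {φ : CForm S}
    (hl : ∀ a ∈ l, StarProvable W R' I' u3 u6 ua ub a) (hL : φ.InLang W R' I')
    (h : ∀ val, (∀ a ∈ l, a.evalB val = true) → φ.evalB val = true) :
    StarProvable W R' I' u3 u6 ua ub φ := by
  induction l generalizing φ with
  | nil => exact of_taut (fun val => h val (by simp)) hL
  | cons a l ih =>
    have ha := hl a List.mem_cons_self
    refine .mp (ih (fun b hb => hl b (List.mem_cons_of_mem a hb)) ⟨ha.inLang, hL⟩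
      fun val hval => ?_) ha
    cases hav : a.evalB val
    · simp [CForm.imp, CForm.evalB, hav]
    · simp [CForm.imp, CForm.evalB, h val (List.forall_mem_cons.2 ⟨hav, hval⟩)]

theorem imp_box_mono {χ : CForm S} {I : S.V → Option S.Val} {hI : I ∈ S.Int} {e e' : Event S}
    (h : StarProvable W R' I' u3 u6 ua ub (χ.imp (.box I hI e))) (he'L : e'.InLang W R')
    (hee' : (e.imp e').Taut) :
    StarProvable W R' I' u3 u6 ua ub (χ.imp (.box I hI e')) := by
  obtain ⟨hχL, hII', heL⟩ := h.inLang
  have hD8 : StarProvable W R' I' u3 u6 ua ub (.box I hI (e.imp e')) :=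
    of_mem_AXbasic (.inr ⟨I, hI, _, hee', rfl⟩) ⟨hII', heL, he'L⟩
  have hD7 : StarProvable W R' I' u3 u6 ua ub
      (((CForm.box I hI e).and (.box I hI (e.imp e'))).imp (.box I hI e')) :=
    of_mem_AXbasic (.inl (.inr ⟨I, hI, e, e', rfl⟩)) ⟨⟨⟨hII', heL⟩, hII', heL, he'L⟩, hII', he'L⟩
  refine of_entails (l := [_, _, _])
    (List.forall_mem_cons.2 ⟨h, List.forall_mem_cons.2 ⟨hD8, List.forall_mem_singleton.2 hD7⟩⟩)
    ⟨hχL, hII', he'L⟩ fun val hval => ?_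
  simp only [List.mem_cons, List.not_mem_nil, or_false, forall_eq_or_imp, forall_eq,
    CForm.imp, CForm.evalB] at hval ⊢
  grind

theorem imp_bigAnd {χ : CForm S} {l : List (CForm S)} (hχL : χ.InLang W R' I')
    (h : ∀ a ∈ l, StarProvable W R' I' u3 u6 ua ub (χ.imp a)) :
    StarProvable W R' I' u3 u6 ua ub (χ.imp (CForm.bigAnd l)) := by
  refine of_entails (l := l.map χ.imp) (by simpa using h)
    ⟨hχL, (CForm.inLang_bigAnd l).2 fun a ha => (h a ha).inLang.2⟩ fun val hval => ?_
  cases hχ : χ.evalB val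
  · simp [CForm.imp, CForm.evalB, hχ]
  · refine Bool.or_eq_true_iff.2 (.inr ((CForm.evalB_bigAnd val l).2 fun a ha => ?_))
    simpa [CForm.imp, CForm.evalB, hχ] using hval _ (List.mem_map_of_mem ha)

variable {C : Set (CForm S)}

theorem imp_not_of_not_consistent_insert {lC : List (CForm S)} (hlC : ∀ a, a ∈ lC ↔ a ∈ C)
    (hCL : ∀ a ∈ C, a.InLang W R' I') {ψ : CForm S}
    (h : ¬ Consistent (StarProvable W R' I' u3 u6 ua ub) (insert ψ C)) (hψL : ψ.InLang W R' I') :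
    StarProvable W R' I' u3 u6 ua ub ((CForm.bigAnd lC).imp ψ.not) := by
  simp only [Consistent, not_forall, not_not] at h
  obtain ⟨l, hl, hnl⟩ := h
  refine of_entails (l := [_]) (List.forall_mem_singleton.2 hnl)
    ⟨(CForm.inLang_bigAnd lC).2 fun a ha => hCL a ((hlC a).1 ha), hψL⟩ fun val hval => ?_
  by_contra hval'
  obtain ⟨hχ, hψ⟩ : (CForm.bigAnd lC).evalB val = true ∧ ψ.evalB val = true := by
    simpa [CForm.imp, CForm.evalB] using hval'
  have hl_true : (CForm.bigAnd l).evalB val = true := (CForm.evalB_bigAnd val l).2 fun a ha =>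
    (Set.mem_insert_iff.1 (hl a ha)).elim (fun h => h ▸ hψ)
      fun haC => (CForm.evalB_bigAnd val lC).1 hχ a ((hlC a).2 haC)
  simp [CForm.evalB, hl_true] at hval

end StarProvable

section Consistency

variable {W : Set S.V} {R' : S.V → Set S.Val} {I' : Set (S.V → Option S.Val)}
  {u3 u6 ua ub : Prop} {C : Set (CForm S)}

theorem Consistent.insert_of_starProvable (hC : Consistent (StarProvable W R' I' u3 u6 ua ub) C)
    (hCfin : C.Finite) (hCL : ∀ a ∈ C, a.InLang W R' I') {ψ : CForm S}
    (hψ : StarProvable W R' I' u3 u6 ua ub ψ) :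
    Consistent (StarProvable W R' I' u3 u6 ua ub) (insert ψ C) := by
  classical
  by_contra hins
  obtain ⟨lC, hlC⟩ : ∃ lC : List (CForm S), ∀ a, a ∈ lC ↔ a ∈ C :=
    ⟨hCfin.toFinset.toList, by simp⟩
  have himp := StarProvable.imp_not_of_not_consistent_insert hlC hCL hins hψ.inLang
  refine hC lC (fun a ha => (hlC a).1 ha) (StarProvable.of_entails (l := [_, _])
    (List.forall_mem_cons.2 ⟨himp, List.forall_mem_singleton.2 hψ⟩) himp.inLang.1 ?_)
  intro val hval
  simp only [List.mem_cons, List.not_mem_nil, or_false, forall_eq_or_imp, forall_eq,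
    CForm.imp, CForm.evalB] at hval ⊢
  grind

theorem exists_consistent_insert_dia_and_eq (hR'sub : ∀ X, R' X ⊆ S.RV X)
    (hI'named : ∀ I ∈ I', ∀ X x, I X = some x → X ∈ W ∧ x ∈ R' X)
    (hC : Consistent (StarProvable W R' I' u3 u6 ua ub) C) (hCfin : C.Finite)
    (hCL : ∀ a ∈ C, a.InLang W R' I') {I : S.V → Option S.Val} {hI : I ∈ S.Int} {φ : Event S}
    (hdia : CForm.dia I hI φ ∈ C) {X : S.V} (hXW : X ∈ W) :
    ∃ (x : S.Val) (hx : x ∈ S.RV X), x ∈ R' X ∧ Consistent (StarProvable W R' I' u3 u6 ua ub)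
      (insert (CForm.dia I hI (φ.and (.prim X x hx))) C) := by
  classical
  by_contra! hincons
  obtain ⟨lC, hlC⟩ : ∃ lC : List (CForm S), ∀ a, a ∈ lC ↔ a ∈ C :=
    ⟨hCfin.toFinset.toList, by simp⟩
  set χ := CForm.bigAnd lC
  have hχL : χ.InLang W R' I' := (CForm.inLang_bigAnd lC).2 fun a ha => hCL a ((hlC a).1 ha)
  obtain ⟨hII', hφL⟩ : I ∈ I' ∧ φ.InLang W R' := hCL _ hdia
  have hne : ∀ x (hx : x ∈ S.RV X), x ∈ R' X →
      StarProvable W R' I' u3 u6 ua ub (χ.imp (.box I hI (φ.imp (.not (.prim X x hx))))) := by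
    intro x hx hxR
    have h := StarProvable.imp_not_of_not_consistent_insert hlC hCL (hincons x hx hxR)
      ⟨hII', hφL, hXW, hxR⟩
    have hbox : StarProvable W R' I' u3 u6 ua ub
        (χ.imp (.box I hI (φ.and (.prim X x hx)).not)) := by
      refine StarProvable.of_entails (l := [_]) (List.forall_mem_singleton.2 h) ?_
        fun val hval => ?_
      · exact ⟨hχL, hII', hφL, hXW, hxR⟩
      · simpa [CForm.imp, CForm.dia, CForm.evalB] using hval
    refine StarProvable.imp_box_mono hbox ?_ fun val => ?_
    · exact ⟨hφL, hXW, hxR⟩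
    · simp only [Event.imp, Event.evalB]
      cases Event.evalB val φ <;> cases val X x <;> rfl
  obtain ⟨l, hsub, hmem, hfresh⟩ := exists_list_subtype_cover
    (CForm.finite_mentionsVal X (χ.imp (.box I hI φ)))
    (fun x => CForm.mem_of_mentionsVal hI'named ⟨hχL, hII', hφL⟩) (hR'sub X)
  have hboxnot : StarProvable W R' I' u3 u6 ua ub (χ.imp (.box I hI φ.not)) :=
    .d2plus hXW l hsub hmem hfresh ⟨hχL, hII', hφL⟩ <| StarProvable.imp_bigAnd hχL fun a ha => by
      obtain ⟨x, hxl, rfl⟩ := List.mem_map.1 ha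
      exact hne x.1 x.2 (hsub x hxl)
  refine hC lC (fun a ha => (hlC a).1 ha) (StarProvable.of_entails (l := [_])
    (List.forall_mem_singleton.2 hboxnot) hχL fun val hval => ?_)
  cases hχ : χ.evalB val
  · rw [CForm.evalB, hχ]; rfl
  · have hdia_true := (CForm.evalB_bigAnd val lC).1 hχ _ ((hlC _).2 hdia)
    simp_all [CForm.imp, CForm.dia, CForm.evalB]

end Consistency

theorem acceptable_extension_general (S : Signature)
    (W : Set S.V)
    (R' : S.V → Set S.Val)
    (hR'sub : ∀ X, R' X ⊆ S.RV X)
    (I' : Set (S.V → Option S.Val))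
    (hI'named : ∀ I ∈ I', ∀ X x, I X = some x → X ∈ W ∧ x ∈ R' X)
    (useD3 useD6p useD10a useD10b : Prop)
    (C : Set (CForm S)) (hCfin : C.Finite)
    (hCL : ∀ ψ ∈ C, ψ.InLang W R' I')
    (hCcons : Consistent
      (ProvableStar (starAxioms S W R' I' useD3 useD6p useD10a useD10b)
        W R' {ψ | ψ.InLang W R' I'}) C)
    (I : S.V → Option S.Val) (hI : I ∈ S.Int)
    (φ : Event S) (hφconj : φ.Conjunctive)
    (hdia : CForm.dia I hI φ ∈ C)
    (X : S.V) (hXW : X ∈ W) :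
    ∃ ψ : CForm S, ψ.InLang W R' I' ∧ ψ ∉ C ∧
      Consistent
        (ProvableStar (starAxioms S W R' I' useD3 useD6p useD10a useD10b)
          W R' {ψ' | ψ'.InLang W R' I'}) (insert ψ C) ∧
      AcceptableFor (insert ψ C) I hI φ R' X := by
  obtain ⟨x, hx, hxR, hcons⟩ :=
    exists_consistent_insert_dia_and_eq hR'sub hI'named hCcons hCfin hCL hdia hXW
  by_cases hmem : CForm.dia I hI (φ.and (.prim X x hx)) ∈ C
  · obtain ⟨ψ, hψt, hψL, hψC⟩ :=
      CForm.exists_taut_inLang_not_mem (W := W) (R' := R') (I' := I') hCfin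
    exact ⟨ψ, hψL, hψC, hCcons.insert_of_starProvable hCfin hCL (.of_taut hψt hψL),
      acceptableFor_of_dia_and_prim_mem hφconj hxR (Set.mem_insert_of_mem ψ hmem)⟩
  · obtain ⟨hII', hφL⟩ : I ∈ I' ∧ φ.InLang W R' := hCL _ hdia
    exact ⟨CForm.dia I hI (φ.and (.prim X x hx)), ⟨hII', hφL, hXW, hxR⟩, hmem, hcons,
      acceptableFor_of_dia_and_prim_mem hφconj hxR (Set.mem_insert _ C)⟩

/-- If `C` is a finite subset of `L_{W,R',I'}(S)` consistent
with `AX*_{basic,A}(S, W, R', I')`, `⟨Y ← y⟩φ ∈ C` with `φ` a conjunctive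
formula, and `X ∈ W`, then there exists a formula `ψ ∈ L_{W,R',I'}(S)` not in
`C` such that `C ∪ {ψ}` is consistent with `AX*_{basic,A}(S, W, R', I')` and is
acceptable for `⟨Y ← y⟩φ` with respect to `X`. -/
theorem acceptable_extension (S : Signature)
    (W : Set S.V) (hWc : W.Countable)
    (R' : S.V → Set S.Val)
    (hR'c : ∀ X ∈ W, (R' X).Countable)
    (hR'sub : ∀ X, R' X ⊆ S.RV X)
    (hR'fin : ∀ X ∈ W, (S.RV X).Finite → R' X = S.RV X)
    (hR'inf : ∀ X ∈ W, ¬ (S.RV X).Finite → ¬ (R' X).Finite)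
    (I' : Set (S.V → Option S.Val)) (hI'c : I'.Countable) (hI'sub : I' ⊆ S.Int)
    (hI'named : ∀ I ∈ I', ∀ X x, I X = some x → X ∈ W ∧ x ∈ R' X)
    (hI'closed : ∀ I₁ ∈ I', ∀ I₂ ∈ S.Int, {X | I₁ X ≠ I₂ X}.Finite →
      (∀ X x, I₂ X = some x → X ∈ W ∧ x ∈ R' X) → I₂ ∈ I')
    (useD3 useD6p useD10a useD10b : Prop)
    (C : Set (CForm S)) (hCfin : C.Finite)
    (hCL : ∀ ψ ∈ C, ψ.InLang W R' I')
    (hCcons : Consistent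
      (ProvableStar (starAxioms S W R' I' useD3 useD6p useD10a useD10b)
        W R' {ψ | ψ.InLang W R' I'}) C)
    (I : S.V → Option S.Val) (hI : I ∈ S.Int)
    (φ : Event S) (hφconj : φ.Conjunctive)
    (hdia : CForm.dia I hI φ ∈ C)
    (X : S.V) (hXW : X ∈ W) :
    ∃ ψ : CForm S, ψ.InLang W R' I' ∧ ψ ∉ C ∧
      Consistent
        (ProvableStar (starAxioms S W R' I' useD3 useD6p useD10a useD10b)
          W R' {ψ' | ψ'.InLang W R' I'}) (insert ψ C) ∧
      AcceptableFor (insert ψ C) I hI φ R' X :=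
  acceptable_extension_general S W R' hR'sub I' hI'named useD3 useD6p useD10a useD10b C hCfin hCL
    hCcons I hI φ hφconj hdia X hXW

end Causal
end

section
/- Let S be a finite signature. For every event ρ and every allowed intervention Y ← y ∈ I, AX+_basic proves [Y ← y]ρ ⇔ [Y ← y](⋀_{v ⊨ ¬ρ} ¬(V = v)), where the conjunction ranges over all assignments v ∈ R(V) that do not satisfy ρ, and V = v abbreviates ⋀_{X ∈ V} X = v[X]. -/
namespace Causal

/-! Every Boolean valuation satisfying the finitely many instances of D1 and D2 is induced by an
assignment, so under `[Y ← y]` (using D7 and D8) any event valid over all assignments is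
provable. Both sides of the equivalence are satisfied by exactly the assignments satisfying `ρ`. -/

section

variable {S : Signature}

namespace Event

@[simp]
lemma evalB_imp (val : S.V → S.Val → Bool) (a b : Event S) :
    (a.imp b).evalB val = (!a.evalB val || b.evalB val) := rfl

lemma sat_imp (w : Assignment S) (a b : Event S) : (a.imp b).sat w ↔ (a.sat w → b.sat w) :=
  imp_iff_not_or.symm

lemma evalB_bigAnd_eq_true (val : S.V → S.Val → Bool) (l : List (Event S)) :
    (bigAnd l).evalB val = true ↔ ∀ e ∈ l, e.evalB val = true := by
  induction l with
  | nil => simp [bigAnd, evalB]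
  | cons e l ih => simp [bigAnd, evalB, ← ih]

lemma evalB_disjEq_eq_true (val : S.V → S.Val → Bool) (X : S.V)
    (l : List {x : S.Val // x ∈ S.RV X}) :
    (disjEq X l).evalB val = true ↔ ∃ x ∈ l, val X x.1 = true := by
  unfold disjEq
  induction l with
  | nil => simp [bigOr, evalB]
  | cons x l ih => simp [bigOr, evalB, ← ih]

lemma sat_bigAnd (w : Assignment S) (l : List (Event S)) :
    (bigAnd l).sat w ↔ ∀ e ∈ l, e.sat w := by
  induction l with
  | nil => simp [bigAnd, sat]
  | cons e l ih => simp [bigAnd, sat, ← ih]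

lemma evalB_eq_true_iff_sat {val : S.V → S.Val → Bool} {w : Assignment S}
    (hw : ∀ X x, x ∈ S.RV X → (val X x = true ↔ w.1 X = x)) (e : Event S) :
    e.evalB val = true ↔ e.sat w := by
  induction e with
  | tru => simp [evalB, sat]
  | prim X x hx => exact hw X x hx
  | not e ih => simp [evalB, sat, ← ih]
  | and a b iha ihb => simp [evalB, sat, ← iha, ← ihb]
  | or a b iha ihb => simp [evalB, sat, ← iha, ← ihb]

lemma sat_bigAnd_prim_iff_eq {lV : List S.V} (hlV : ∀ X, X ∈ lV) (v w : Assignment S) :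
    (bigAnd (lV.map fun X => prim X (v.1 X) (v.2 X))).sat w ↔ w = v := by
  simp only [sat_bigAnd, List.mem_map, forall_exists_index, and_imp,
    forall_apply_eq_imp_iff₂, sat]
  exact ⟨fun h => Subtype.ext (funext fun X => h X (hlV X)), fun h => by simp [h]⟩

lemma sat_bigAnd_not_eq_iff {lV : List S.V} (hlV : ∀ X, X ∈ lV) (lA : List (Assignment S))
    (w : Assignment S) :
    (bigAnd (lA.map fun v => not (bigAnd (lV.map fun X => prim X (v.1 X) (v.2 X))))).sat w ↔
      w ∉ lA := by
  simp only [sat_bigAnd, List.mem_map, forall_exists_index, and_imp,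
    forall_apply_eq_imp_iff₂, sat, sat_bigAnd_prim_iff_eq hlV]
  exact ⟨fun h hw => h w hw rfl, fun h v hv hwv => h (hwv ▸ hv)⟩

end Event

lemma provable_of_taut {φ : CForm S} (h : φ.Taut) : Provable (AXbasic S) φ :=
  .ax (.inl (.inl (.inl (.inl (.inl h)))))

lemma provable_box_of_taut {I : S.V → Option S.Val} (hI : I ∈ S.Int) {e : Event S}
    (h : e.Taut) : Provable (AXbasic S) (.box I hI e) :=
  .ax (.inr ⟨I, hI, e, h, rfl⟩)

lemma provable_box_functional {I : S.V → Option S.Val} (hI : I ∈ S.Int) {X : S.V}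
    {x x' : S.Val} (hx : x ∈ S.RV X) (hx' : x' ∈ S.RV X) (hne : x ≠ x') :
    Provable (AXbasic S) (.box I hI ((Event.prim X x hx).imp (.not (.prim X x' hx')))) :=
  .ax (.inl (.inl (.inl (.inl (.inr ⟨I, hI, X, x, x', hx, hx', hne, rfl⟩)))))

lemma provable_box_definite {I : S.V → Option S.Val} (hI : I ∈ S.Int) {X : S.V}
    {l : List {x : S.Val // x ∈ S.RV X}} (hl : ∀ x, x ∈ l) :
    Provable (AXbasic S) (.box I hI (Event.disjEq X l)) :=
  .ax (.inl (.inl (.inl (.inr ⟨I, hI, X, l, hl, rfl⟩))))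

lemma provable_distrib {I : S.V → Option S.Val} (hI : I ∈ S.Int) (a b : Event S) :
    Provable (AXbasic S) (((CForm.box I hI a).and (.box I hI (a.imp b))).imp (.box I hI b)) :=
  .ax (.inl (.inr ⟨I, hI, a, b, rfl⟩))

lemma Provable.box_mp {I : S.V → Option S.Val} {hI : I ∈ S.Int} {a b : Event S}
    (hab : Provable (AXbasic S) (.box I hI (a.imp b)))
    (ha : Provable (AXbasic S) (.box I hI a)) :
    Provable (AXbasic S) (.box I hI b) := by
  have curry : CForm.Taut ((((CForm.box I hI a).and (.box I hI (a.imp b))).imp (.box I hI b)).imp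
      ((CForm.box I hI a).imp ((CForm.box I hI (a.imp b)).imp (.box I hI b)))) := by
    intro val
    simp only [CForm.imp, CForm.evalB]
    cases val I a <;> cases val I (a.imp b) <;> cases val I b <;> rfl
  exact .mp (.mp (.mp (provable_of_taut curry) (provable_distrib hI a b)) ha) hab

lemma provable_box_bigAnd {I : S.V → Option S.Val} {hI : I ∈ S.Int} {l : List (Event S)}
    (h : ∀ e ∈ l, Provable (AXbasic S) (.box I hI e)) :
    Provable (AXbasic S) (.box I hI (Event.bigAnd l)) := by
  induction l with
  | nil => exact provable_box_of_taut hI fun _ => rfl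
  | cons e l ih =>
    have intro_and : (e.imp ((Event.bigAnd l).imp (e.and (Event.bigAnd l)))).Taut := by
      intro val
      simp only [Event.evalB_imp, Event.evalB]
      cases e.evalB val <;> cases (Event.bigAnd l).evalB val <;> rfl
    exact ((provable_box_of_taut hI intro_and).box_mp (h e (by simp))).box_mp
      (ih fun e' he' => h e' (by simp [he']))

lemma Provable.box_iff_box {I : S.V → Option S.Val} {hI : I ∈ S.Int} {a b : Event S}
    (hab : Provable (AXbasic S) (.box I hI (a.imp b)))
    (hba : Provable (AXbasic S) (.box I hI (b.imp a))) :
    Provable (AXbasic S) ((CForm.box I hI a).iff (.box I hI b)) := by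
  have combine : CForm.Taut
      ((((CForm.box I hI a).and (.box I hI (a.imp b))).imp (.box I hI b)).imp
        ((((CForm.box I hI b).and (.box I hI (b.imp a))).imp (.box I hI a)).imp
          ((CForm.box I hI (a.imp b)).imp ((CForm.box I hI (b.imp a)).imp
            ((CForm.box I hI a).iff (.box I hI b)))))) := by
    intro val
    simp only [CForm.iff, CForm.imp, CForm.evalB]
    cases val I a <;> cases val I b <;> cases val I (a.imp b) <;> cases val I (b.imp a) <;> rfl
  exact .mp (.mp (.mp (.mp (provable_of_taut combine) (provable_distrib hI a b))
    (provable_distrib hI b a)) hab) hba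

lemma exists_provable_box_determining_assignment [Finite S.V] (hRV : ∀ X, (S.RV X).Finite)
    {I : S.V → Option S.Val} (hI : I ∈ S.Int) :
    ∃ χ : Event S, Provable (AXbasic S) (.box I hI χ) ∧ ∀ val, χ.evalB val = true →
      ∃ w : Assignment S, ∀ X x, x ∈ S.RV X → (val X x = true ↔ w.1 X = x) := by
  have : ∀ X, Fintype (S.RV X) := fun X => (hRV X).fintype
  let definite (X : S.V) : Event S := Event.disjEq X Finset.univ.toList
  let functional (q : Σ X, {p : S.RV X × S.RV X // p.1 ≠ p.2}) : Event S :=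
    (Event.prim q.1 q.2.1.1 q.2.1.1.2).imp (.not (.prim q.1 q.2.1.2 q.2.1.2.2))
  obtain ⟨s, hs⟩ :=
    ((Set.finite_range definite).union (Set.finite_range functional)).exists_finset_coe
  have mem_s : ∀ e, e ∈ s.toList ↔ e ∈ Set.range definite ∪ Set.range functional := by
    simp [← hs]
  refine ⟨Event.bigAnd s.toList, provable_box_bigAnd fun e he => ?_, fun val hval => ?_⟩
  · rcases (mem_s e).1 he with ⟨X, rfl⟩ | ⟨⟨X, ⟨x, x'⟩, hne⟩, rfl⟩
    · exact provable_box_definite hI fun x => Finset.mem_toList.2 (Finset.mem_univ x)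
    · exact provable_box_functional hI x.2 x'.2 (Subtype.coe_ne_coe.2 hne)
  rw [Event.evalB_bigAnd_eq_true] at hval
  have exists_val : ∀ X, ∃ x : S.RV X, val X x = true := fun X => by
    obtain ⟨x, -, hx⟩ := (Event.evalB_disjEq_eq_true val X _).1
      (hval _ ((mem_s _).2 (.inl ⟨X, rfl⟩)))
    exact ⟨x, hx⟩
  have unique_val : ∀ X (x x' : S.RV X), val X x = true → val X x' = true → x = x' := by
    intro X x x' hx hx'
    by_contra hne
    simpa [functional, Event.evalB, hx, hx'] using
      hval _ ((mem_s _).2 (.inr ⟨⟨X, ⟨x, x'⟩, hne⟩, rfl⟩))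
  choose w hw using exists_val
  refine ⟨⟨fun X => w X, fun X => (w X).2⟩, fun X x hx => ⟨fun h => ?_, fun h => ?_⟩⟩
  · exact congrArg Subtype.val (unique_val X (w X) ⟨x, hx⟩ (hw X) h)
  · simpa [← h] using hw X

lemma provable_box_of_forall_sat [Finite S.V] (hRV : ∀ X, (S.RV X).Finite)
    {I : S.V → Option S.Val} (hI : I ∈ S.Int) {e : Event S} (he : ∀ w, e.sat w) :
    Provable (AXbasic S) (.box I hI e) := by
  obtain ⟨χ, hχ, hdet⟩ := exists_provable_box_determining_assignment hRV hI
  refine .box_mp (provable_box_of_taut hI fun val => ?_) hχ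
  cases hval : χ.evalB val
  · simp [hval]
  · obtain ⟨w, hw⟩ := hdet val hval
    simp [(Event.evalB_eq_true_iff_sat hw e).2 (he w)]

lemma provable_box_iff_box_of_sat_iff [Finite S.V] (hRV : ∀ X, (S.RV X).Finite)
    {I : S.V → Option S.Val} (hI : I ∈ S.Int) {a b : Event S} (h : ∀ w, a.sat w ↔ b.sat w) :
    Provable (AXbasic S) ((CForm.box I hI a).iff (.box I hI b)) :=
  .box_iff_box
    (provable_box_of_forall_sat hRV hI fun w => (Event.sat_imp w a b).2 (h w).1)
    (provable_box_of_forall_sat hRV hI fun w => (Event.sat_imp w b a).2 (h w).2)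

end

theorem box_iff_conj_of_nonsolutions_general (S : Signature) (hfin : S.IsFinite)
    (lV : List S.V) (hlV : ∀ X : S.V, X ∈ lV)
    (I : S.V → Option S.Val) (hI : I ∈ S.Int) (ρ : Event S)
    (lA : List (Assignment S))
    (hlA : ∀ v : Assignment S, v ∈ lA ↔ ¬ ρ.sat v) :
    Provable (AXbasic S) (CForm.iff (CForm.box I hI ρ)
      (CForm.box I hI (Event.bigAnd (lA.map fun v =>
        Event.not (Event.bigAnd (lV.map fun X => Event.prim X (v.1 X) (v.2 X))))))) := by
  obtain ⟨-, hV, -, hRV⟩ := hfin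
  refine provable_box_iff_box_of_sat_iff hRV hI fun w => ?_
  rw [Event.sat_bigAnd_not_eq_iff hlV, hlA, not_not]

/-- Let `S` be a finite signature.  For every event `ρ` and
every allowed intervention `Y ← y ∈ I`, `AX⁺_basic` proves
`[Y ← y]ρ ⇔ [Y ← y](⋀_{v ⊨ ¬ρ} ¬(V = v))`, where the conjunction ranges over
all assignments `v ∈ R(V)` not satisfying `ρ` (enumerated by the list `lA`)
and `V = v` abbreviates `⋀_{X ∈ V} X = v[X]` (with `V` enumerated by `lV`). -/
theorem box_iff_conj_of_nonsolutions (S : Signature) (hfin : S.IsFinite)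
    (lV : List S.V) (hlV : ∀ X : S.V, X ∈ lV) (hndV : lV.Nodup)
    (I : S.V → Option S.Val) (hI : I ∈ S.Int) (ρ : Event S)
    (lA : List (Assignment S)) (hndA : lA.Nodup)
    (hlA : ∀ v : Assignment S, v ∈ lA ↔ ¬ ρ.sat v) :
    Provable (AXbasic S) (CForm.iff (CForm.box I hI ρ)
      (CForm.box I hI (Event.bigAnd (lA.map fun v =>
        Event.not (Event.bigAnd (lV.map fun X => Event.prim X (v.1 X) (v.2 X))))))) :=
  box_iff_conj_of_nonsolutions_general S hfin lV hlV I hI ρ lA hlA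

end Causal
end

section
/- Let S be a finite universal signature and let AX⁻ consist of D0, D2, D3, D6, D7, D8, D10(a), D10(b) and MP. Then AX⁻ proves every instance of D5: AX⁻ ⊢ (⟨X ← x; Y ← y⟩(W = w ∧ Z = z) ∧ ⟨X ← x; W ← w⟩(Y = y ∧ Z = z)) ⇒ ⟨X ← x⟩(W = w ∧ Y = y ∧ Z = z), and this holds for any subset Z of V − (X ∪ {W, Y}), not only Z = V − (X ∪ {W, Y}). -/
/-! Under D10 every intervention has exactly one outcome, so `⟨X ← x⟩` and `[X ← x]` are
interchangeable and D3 becomes a rule moving a value from `X ← x` to `X ← x; W ← w`.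
Functionality (D1) is not among the axioms, but D6 yields it: two values of `A` under
`X ← x` would make `A ⇝ A`. The heart of D5 is that `Y = y` already holds under `X ← x`.
Otherwise, if `W = w` held there, composition with `⟨X ← x; W ← w⟩(Y = y)` would force
`Y = y`; and if not, `Y ⇝ W` and `W ⇝ Y` would form a cycle. Once `Y = y` holds under
`X ← x`, composition moves `W = w` and each conjunct of `Z = z` back from `X ← x; Y ← y`
to `X ← x`. -/

namespace Causal

variable {S : Signature}

lemma CForm.evalB_imp_eq_true {val} {a b : CForm S} :
    (a.imp b).evalB val = true ↔ (a.evalB val = true → b.evalB val = true) := by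
  simp only [CForm.imp, CForm.evalB, Bool.or_eq_true, Bool.not_eq_true']
  cases a.evalB val <;> simp

lemma CForm.taut_imp {a b : CForm S}
    (h : ∀ val, a.evalB val = true → b.evalB val = true) : (a.imp b).Taut :=
  fun val => CForm.evalB_imp_eq_true.2 (h val)

lemma CForm.taut_imp₂ {a b c : CForm S}
    (h : ∀ val, a.evalB val = true → b.evalB val = true → c.evalB val = true) :
    (a.imp (b.imp c)).Taut :=
  CForm.taut_imp fun val ha => CForm.evalB_imp_eq_true.2 (h val ha)

lemma Event.evalB_imp_eq_true {val} {a b : Event S} :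
    (a.imp b).evalB val = true ↔ (a.evalB val = true → b.evalB val = true) := by
  simp only [Event.imp, Event.evalB, Bool.or_eq_true, Bool.not_eq_true']
  cases a.evalB val <;> simp

lemma Event.evalB_bigAnd {val} {l : List (Event S)} :
    (Event.bigAnd l).evalB val = true ↔ ∀ e ∈ l, e.evalB val = true := by
  induction l with
  | nil => simp [Event.bigAnd, Event.evalB]
  | cons e l ih => simp [Event.bigAnd, Event.evalB, ← ih]

lemma AxD0_subset_AXminus : AxD0 S ⊆ AXminus S := fun _ h => by
  simp only [AXminus, Set.mem_union]; tauto

lemma AxD2_subset_AXminus : AxD2 S ⊆ AXminus S := fun _ h => by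
  simp only [AXminus, Set.mem_union]; tauto

lemma AxD3_subset_AXminus : AxD3 S ⊆ AXminus S := fun _ h => by
  simp only [AXminus, Set.mem_union]; tauto

lemma AxD6_subset_AXminus : AxD6 S ⊆ AXminus S := fun _ h => by
  simp only [AXminus, Set.mem_union]; tauto

lemma AxD7_subset_AXminus : AxD7 S ⊆ AXminus S := fun _ h => by
  simp only [AXminus, Set.mem_union]; tauto

lemma AxD8_subset_AXminus : AxD8 S ⊆ AXminus S := fun _ h => by
  simp only [AXminus, Set.mem_union]; tauto

lemma AxD10a_subset_AXminus : AxD10a S ⊆ AXminus S := fun _ h => by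
  simp only [AXminus, Set.mem_union]; tauto

lemma AxD10b_subset_AXminus : AxD10b S ⊆ AXminus S := fun _ h => by
  simp only [AXminus, Set.mem_union]; tauto

inductive Deriv : List (CForm S) → CForm S → Prop
  | ax {Γ φ} : φ ∈ AXminus S → Deriv Γ φ
  | hyp {Γ φ} : φ ∈ Γ → Deriv Γ φ
  | mp {Γ φ ψ} : Deriv Γ (CForm.imp φ ψ) → Deriv Γ φ → Deriv Γ ψ

lemma updInt_mem_Int (huniv : S.Universal) {I : S.V → Option S.Val} (hI : I ∈ S.Int)
    {X : S.V} {x : S.Val} (hx : x ∈ S.RV X) : updInt I X x ∈ S.Int := by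
  rw [huniv]
  intro Y v hYv
  unfold updInt at hYv
  split_ifs at hYv with hYX
  · cases hYv
    exact hYX ▸ hx
  · exact S.Int_ok I hI Y v hYv

lemma finite_setOf_validInt (hfin : S.IsFinite) :
    {I : S.V → Option S.Val | ValidInt S I}.Finite := by
  have := hfin.2.1
  refine (Set.Finite.pi fun X => ((hfin.2.2.2 X).image some).insert none).subset
    fun I hI X _ => ?_
  cases h : I X with
  | none => exact Set.mem_insert _ _
  | some x => exact Set.mem_insert_of_mem _ ⟨x, hI X x h, rfl⟩

lemma exists_isLeadsTo (hfin : S.IsFinite) (B A : S.V) : ∃ g : CForm S, IsLeadsTo B A g := by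
  set P : Set ((S.V → Option S.Val) × S.Val × S.Val × S.Val) :=
    {q | q.1 ∈ S.Int ∧ q.2.1 ∈ S.RV B ∧ updInt q.1 B q.2.1 ∈ S.Int ∧
      q.2.2.1 ∈ S.RV A ∧ q.2.2.2 ∈ S.RV A}
  have hP : P.Finite :=
    ((finite_setOf_validInt hfin).prod ((hfin.2.2.2 B).prod
      ((hfin.2.2.2 A).prod (hfin.2.2.2 A)))).subset
      fun q hq => ⟨S.Int_ok _ hq.1, hq.2.1, hq.2.2.2⟩
  set T : Set (CForm S) := {ψ | ∃ (I : S.V → Option S.Val) (hI : I ∈ S.Int)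
    (y : S.Val) (_ : y ∈ S.RV B) (hIY : updInt I B y ∈ S.Int) (z z' : S.Val)
    (hz : z ∈ S.RV A) (hz' : z' ∈ S.RV A), z ≠ z' ∧ ψ = ltComp I hI B y hIY A z z' hz hz'}
  have hT : T.Finite := (hP.dependent_image fun q hq =>
      ltComp q.1 hq.1 B q.2.1 hq.2.2.1 A q.2.2.1 q.2.2.2 hq.2.2.2.1 hq.2.2.2.2).subset <| by
    rintro _ ⟨I, hI, y, hy, hIY, z, z', hz, hz', -, rfl⟩
    exact ⟨(I, y, z, z'), ⟨hI, hy, hIY, hz, hz'⟩, rfl⟩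
  refine ⟨_, hT.toFinset.toList, fun ψ hψ => ?_, fun I hI y hy hIY z z' hz hz' hne => ?_, rfl⟩
  · exact hT.mem_toFinset.1 (Finset.mem_toList.1 hψ)
  · exact Finset.mem_toList.2 (hT.mem_toFinset.2 ⟨I, hI, y, hy, hIY, z, z', hz, hz', hne, rfl⟩)

namespace Deriv

variable {Γ : List (CForm S)} {a b c : CForm S} {I : S.V → Option S.Val} {hI : I ∈ S.Int}
  {e f : Event S}

lemma toProvable {φ : CForm S} (h : Deriv [] φ) : Provable (AXminus S) φ := by
  generalize hΓ : ([] : List (CForm S)) = Γ at h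
  induction h with
  | ax h => exact .ax h
  | hyp h => subst hΓ; exact (List.not_mem_nil h).elim
  | mp _ _ ih₁ ih₂ => exact .mp ih₁ ih₂

lemma of_taut (h : a.Taut) : Deriv Γ a := .ax (AxD0_subset_AXminus h)

lemma hyp_head : Deriv (a :: Γ) a := .hyp List.mem_cons_self

lemma weaken {Γ' : List (CForm S)} (h : Deriv Γ a) (hsub : Γ ⊆ Γ') : Deriv Γ' a := by
  induction h with
  | ax h => exact .ax h
  | hyp h => exact .hyp (hsub h)
  | mp _ _ ih₁ ih₂ => exact .mp ih₁ ih₂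

lemma weaken_cons (h : Deriv Γ a) : Deriv (b :: Γ) a :=
  h.weaken (List.subset_cons_self b Γ)

lemma mp_taut (h : ∀ val, a.evalB val = true → b.evalB val = true) (ha : Deriv Γ a) :
    Deriv Γ b :=
  .mp (of_taut (CForm.taut_imp h)) ha

lemma mp_taut₂
    (h : ∀ val, a.evalB val = true → b.evalB val = true → c.evalB val = true)
    (ha : Deriv Γ a) (hb : Deriv Γ b) : Deriv Γ c :=
  .mp (.mp (of_taut (CForm.taut_imp₂ h)) ha) hb

lemma deduction (h : Deriv (a :: Γ) b) : Deriv Γ (a.imp b) := by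
  induction h with
  | ax h => exact mp_taut (fun _ h => CForm.evalB_imp_eq_true.2 fun _ => h) (.ax h)
  | hyp h =>
    rcases List.mem_cons.1 h with rfl | h
    · exact of_taut (CForm.taut_imp fun _ h => h)
    · exact mp_taut (fun _ h => CForm.evalB_imp_eq_true.2 fun _ => h) (.hyp h)
  | mp _ _ ih₁ ih₂ =>
    refine mp_taut₂ (fun _ h₁ h₂ => ?_) ih₁ ih₂
    simp only [CForm.evalB_imp_eq_true] at *
    tauto

lemma and_intro (ha : Deriv Γ a) (hb : Deriv Γ b) : Deriv Γ (a.and b) :=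
  mp_taut₂ (fun _ ha hb => by simp [CForm.evalB, ha, hb]) ha hb

lemma and_left (h : Deriv Γ (a.and b)) : Deriv Γ a :=
  mp_taut (fun _ h => by simp_all [CForm.evalB]) h

lemma and_right (h : Deriv Γ (a.and b)) : Deriv Γ b :=
  mp_taut (fun _ h => by simp_all [CForm.evalB]) h

lemma absurd (ha : Deriv Γ a) (hna : Deriv Γ (CForm.not a)) : Deriv Γ c :=
  mp_taut₂ (fun _ ha hna => by simp_all [CForm.evalB]) ha hna

lemma not_intro (hb : Deriv (a :: Γ) b) (hnb : Deriv (a :: Γ) (CForm.not b)) :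
    Deriv Γ (CForm.not a) :=
  mp_taut₂ (fun _ hb hnb => by simp_all [CForm.evalB, CForm.evalB_imp_eq_true])
    hb.deduction hnb.deduction

lemma by_cases (hpos : Deriv (a :: Γ) c) (hneg : Deriv (CForm.not a :: Γ) c) :
    Deriv Γ c := by
  refine mp_taut₂ (fun val hpos hneg => ?_) hpos.deduction hneg.deduction
  simp only [CForm.evalB_imp_eq_true, CForm.evalB] at *
  cases h : a.evalB val <;> simp_all

lemma bigOr_intro {l : List (CForm S)} (hal : a ∈ l) (ha : Deriv Γ a) :
    Deriv Γ (CForm.bigOr l) := by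
  induction l with
  | nil => exact (List.not_mem_nil hal).elim
  | cons e l ih =>
    rcases List.mem_cons.1 hal with rfl | hal
    · exact mp_taut (fun _ h => by simp [CForm.bigOr, CForm.evalB, h]) ha
    · exact mp_taut (fun _ h => by simp_all [CForm.bigOr, CForm.evalB]) (ih hal)

lemma box_of_taut (h : e.Taut) : Deriv Γ (CForm.box I hI e) :=
  .ax (AxD8_subset_AXminus ⟨I, hI, e, h, rfl⟩)

lemma box_mono (hef : ∀ val, e.evalB val = true → f.evalB val = true)
    (h : Deriv Γ (CForm.box I hI e)) : Deriv Γ (CForm.box I hI f) := by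
  have hD7 : Deriv Γ (((CForm.box I hI e).and (CForm.box I hI (e.imp f))).imp
      (CForm.box I hI f)) :=
    .ax (AxD7_subset_AXminus ⟨I, hI, e, f, rfl⟩)
  exact .mp hD7 (and_intro h (box_of_taut fun val => Event.evalB_imp_eq_true.2 (hef val)))

lemma box_and (he : Deriv Γ (CForm.box I hI e)) (hf : Deriv Γ (CForm.box I hI f)) :
    Deriv Γ (CForm.box I hI (e.and f)) := by
  have hD7 : Deriv Γ (((CForm.box I hI f).and (CForm.box I hI (f.imp (e.and f)))).imp
      (CForm.box I hI (e.and f))) :=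
    .ax (AxD7_subset_AXminus ⟨I, hI, f, _, rfl⟩)
  refine .mp hD7 (and_intro hf (box_mono (fun _ he => ?_) he))
  simp [Event.evalB_imp_eq_true, Event.evalB, he]

lemma box_left (h : Deriv Γ (CForm.box I hI (e.and f))) : Deriv Γ (CForm.box I hI e) :=
  box_mono (fun _ h => by simp_all [Event.evalB]) h

lemma box_right (h : Deriv Γ (CForm.box I hI (e.and f))) : Deriv Γ (CForm.box I hI f) :=
  box_mono (fun _ h => by simp_all [Event.evalB]) h

lemma box_bigAnd {l : List (Event S)} (h : ∀ e ∈ l, Deriv Γ (CForm.box I hI e)) :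
    Deriv Γ (CForm.box I hI (Event.bigAnd l)) := by
  induction l with
  | nil => exact box_of_taut fun _ => rfl
  | cons e l ih => exact box_and (h e List.mem_cons_self) (ih fun e he => h e (.tail _ he))

lemma dia_true : Deriv Γ (CForm.dia I hI Event.tru) :=
  .ax (AxD10a_subset_AXminus ⟨I, hI, rfl⟩)

lemma box_of_dia (h : Deriv Γ (CForm.dia I hI e)) : Deriv Γ (CForm.box I hI e) :=
  .mp (.ax (AxD10b_subset_AXminus ⟨I, hI, e, rfl⟩)) h

lemma dia_of_box (h : Deriv Γ (CForm.box I hI e)) : Deriv Γ (CForm.dia I hI e) := by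
  refine not_intro (b := CForm.box I hI (Event.not Event.tru)) ?_ dia_true
  exact box_mono (fun _ h => by simp_all [Event.evalB]) (box_and h.weaken_cons hyp_head)

lemma box_not_of_not_box (h : Deriv Γ (CForm.not (CForm.box I hI e))) :
    Deriv Γ (CForm.box I hI (Event.not e)) := by
  have hD10b : Deriv Γ ((CForm.dia I hI e).imp (CForm.box I hI e)) :=
    .ax (AxD10b_subset_AXminus ⟨I, hI, e, rfl⟩)
  exact mp_taut₂ (fun _ h₁ h₂ => by
    simp_all [CForm.evalB_imp_eq_true, CForm.dia, CForm.evalB]) hD10b h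

lemma box_updInt_of_box_and {W : S.V} {w : S.Val} {hw : w ∈ S.RV W}
    (hIW : updInt I W w ∈ S.Int) (h : Deriv Γ (CForm.box I hI ((Event.prim W w hw).and e))) :
    Deriv Γ (CForm.box (updInt I W w) hIW e) := by
  have hD3 : Deriv Γ ((CForm.dia I hI ((Event.prim W w hw).and e)).imp
      (CForm.dia (updInt I W w) hIW e)) :=
    .ax (AxD3_subset_AXminus ⟨I, hI, W, w, hw, hIW, e, rfl⟩)
  exact box_of_dia (.mp hD3 (dia_of_box h))

lemma cases_box_bigOr (l : List (Event S)) (hl : Deriv Γ (CForm.box I hI (Event.bigOr l)))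
    (hcases : ∀ e ∈ l, Deriv (CForm.box I hI e :: Γ) c) : Deriv Γ c := by
  induction l generalizing Γ with
  | nil => exact absurd hl dia_true
  | cons e l ih =>
    refine by_cases (hcases e List.mem_cons_self) (ih ?_ fun f hf => ?_)
    · refine box_mono (fun val h => ?_) (box_and hl.weaken_cons (box_not_of_not_box hyp_head))
      cases he : e.evalB val <;> simp_all [Event.bigOr, Event.evalB]
    · exact (hcases f (.tail _ hf)).weaken (List.cons_subset_cons _ (List.subset_cons_self _ _))

variable (hI) in
lemma cases_box_value (hfin : S.IsFinite) (X : S.V)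
    (hcases : ∀ x (hx : x ∈ S.RV X), Deriv (CForm.box I hI (Event.prim X x hx) :: Γ) c) :
    Deriv Γ c := by
  have := (hfin.2.2.2 X).fintype
  have hD2 : Deriv Γ (CForm.box I hI (Event.disjEq X Finset.univ.toList)) :=
    .ax (AxD2_subset_AXminus
      ⟨I, hI, X, _, fun x => Finset.mem_toList.2 (Finset.mem_univ x), rfl⟩)
  refine cases_box_bigOr _ hD2 fun e he => ?_
  obtain ⟨x, -, rfl⟩ := List.mem_map.1 he
  exact hcases x.1 x.2

lemma leadsTo_of_box {X : S.V → Option S.Val} {hX : X ∈ S.Int} {A B : S.V} {b : S.Val}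
    (hb : b ∈ S.RV B) {hXB : updInt X B b ∈ S.Int} {a a' : S.Val} {ha : a ∈ S.RV A}
    {ha' : a' ∈ S.RV A} (hne : a ≠ a') (h : Deriv Γ (CForm.box X hX (Event.prim A a ha)))
    (h' : Deriv Γ (CForm.box (updInt X B b) hXB (Event.prim A a' ha')))
    {g : CForm S} (hg : IsLeadsTo B A g) : Deriv Γ g := by
  obtain ⟨l, -, hl, rfl⟩ := hg
  exact bigOr_intro (hl X hX b hb hXB a a' ha ha' hne) (and_intro h h')

lemma not_leadsTo_self {A : S.V} {g : CForm S} (hg : IsLeadsTo A A g) :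
    Deriv Γ (CForm.not g) :=
  have hD6 : Deriv Γ ((CForm.bigAnd []).imp (CForm.not g)) :=
    .ax (AxD6_subset_AXminus ⟨0, fun _ => A, Fin.elim0, g, fun i => i.elim0, hg, rfl⟩)
  .mp hD6 (of_taut fun _ => rfl)

lemma not_leadsTo_of_leadsTo {A B : S.V} {g g' : CForm S} (hg : IsLeadsTo A B g)
    (hg' : IsLeadsTo B A g') (h : Deriv Γ g) : Deriv Γ (CForm.not g') := by
  have hD6 : Deriv Γ ((CForm.bigAnd [g]).imp (CForm.not g')) := by
    refine .ax (AxD6_subset_AXminus ⟨1, ![A, B], ![g], g', fun i => ?_, hg', rfl⟩)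
    fin_cases i
    exact hg
  exact .mp hD6 (and_intro h (of_taut fun _ => rfl))

/-- The instance of `A ⇝ A` is witnessed by the intervention `X; A ← a`. -/
lemma absurd_of_box_ne (hfin : S.IsFinite) (huniv : S.Universal)
    {X : S.V → Option S.Val} {hX : X ∈ S.Int} {A : S.V} {a a' : S.Val} {ha : a ∈ S.RV A}
    {ha' : a' ∈ S.RV A} (hne : a ≠ a') (h : Deriv Γ (CForm.box X hX (Event.prim A a ha)))
    (h' : Deriv Γ (CForm.box X hX (Event.prim A a' ha'))) : Deriv Γ c := by
  obtain ⟨g, hg⟩ := exists_isLeadsTo hfin A A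
  refine absurd ?_ (not_leadsTo_self hg)
  refine cases_box_value (updInt_mem_Int huniv hX ha) hfin A fun f _ => ?_
  by_cases hfa : f = a
  · subst hfa
    exact leadsTo_of_box ha hne.symm h'.weaken_cons hyp_head hg
  · exact leadsTo_of_box ha (Ne.symm hfa) h.weaken_cons hyp_head hg

lemma box_of_box_updInt (hfin : S.IsFinite) (huniv : S.Universal) {A B : S.V} {a b : S.Val}
    {ha : a ∈ S.RV A} {hb : b ∈ S.RV B} (hIA : updInt I A a ∈ S.Int)
    (hA : Deriv Γ (CForm.box I hI (Event.prim A a ha)))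
    (hB : Deriv Γ (CForm.box (updInt I A a) hIA (Event.prim B b hb))) :
    Deriv Γ (CForm.box I hI (Event.prim B b hb)) := by
  refine cases_box_value hI hfin B fun b₀ hb₀ => ?_
  by_cases hb₀b : b₀ = b
  · subst hb₀b
    exact hyp_head
  · have hB₀ : Deriv _ (CForm.box (updInt I A a) hIA (Event.prim B b₀ hb₀)) :=
      box_updInt_of_box_and hIA (box_and hA.weaken_cons hyp_head)
    exact absurd_of_box_ne hfin huniv hb₀b hB₀ hB.weaken_cons

lemma box_of_box_updInt_of_box_updInt (hfin : S.IsFinite) (huniv : S.Universal) {Y W : S.V}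
    {y w : S.Val} {hy : y ∈ S.RV Y} {hw : w ∈ S.RV W} {hIY : updInt I Y y ∈ S.Int}
    {hIW : updInt I W w ∈ S.Int}
    (hYW : Deriv Γ (CForm.box (updInt I Y y) hIY (Event.prim W w hw)))
    (hWY : Deriv Γ (CForm.box (updInt I W w) hIW (Event.prim Y y hy))) :
    Deriv Γ (CForm.box I hI (Event.prim Y y hy)) := by
  refine cases_box_value hI hfin Y fun y₀ hy₀ => ?_
  by_cases hy₀y : y₀ = y
  · subst hy₀y
    exact hyp_head
  refine cases_box_value hI hfin W fun w₀ hw₀ => ?_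
  have hY₀ : Deriv (CForm.box I hI (Event.prim W w₀ hw₀) ::
      CForm.box I hI (Event.prim Y y₀ hy₀) :: Γ) (CForm.box I hI (Event.prim Y y₀ hy₀)) :=
    hyp_head.weaken_cons
  by_cases hw₀w : w₀ = w
  · subst hw₀w
    exact absurd_of_box_ne hfin huniv hy₀y hY₀
      (box_of_box_updInt hfin huniv hIW hyp_head hWY.weaken_cons.weaken_cons)
  obtain ⟨g, hg⟩ := exists_isLeadsTo hfin Y W
  obtain ⟨g', hg'⟩ := exists_isLeadsTo hfin W Y
  have hWleadsY := leadsTo_of_box hw hy₀y hY₀ hWY.weaken_cons.weaken_cons hg'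
  exact absurd hWleadsY <| not_leadsTo_of_leadsTo hg hg' <|
    leadsTo_of_box hy hw₀w hyp_head hYW.weaken_cons.weaken_cons hg

lemma dia_of_dia_updInt_of_dia_updInt (hfin : S.IsFinite) (huniv : S.Universal) {Y W : S.V}
    {y w : S.Val} {hy : y ∈ S.RV Y} {hw : w ∈ S.RV W} {hIY : updInt I Y y ∈ S.Int}
    {hIW : updInt I W w ∈ S.Int} {lZ : List ((X : S.V) × {x : S.Val // x ∈ S.RV X})}
    (hYW : Deriv Γ (CForm.dia (updInt I Y y) hIY ((Event.prim W w hw).and (Event.conjEqL lZ))))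
    (hWY : Deriv Γ (CForm.dia (updInt I W w) hIW ((Event.prim Y y hy).and (Event.conjEqL lZ)))) :
    Deriv Γ (CForm.dia I hI
      ((Event.prim W w hw).and ((Event.prim Y y hy).and (Event.conjEqL lZ)))) := by
  have hY : Deriv Γ (CForm.box I hI (Event.prim Y y hy)) :=
    box_of_box_updInt_of_box_updInt hfin huniv (box_left (box_of_dia hYW))
      (box_left (box_of_dia hWY))
  have hW := box_of_box_updInt hfin huniv hIY hY (box_left (box_of_dia hYW))
  have hZ : Deriv Γ (CForm.box I hI (Event.conjEqL lZ)) := box_bigAnd fun e he => by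
    obtain ⟨p, -, rfl⟩ := List.mem_map.1 he
    exact box_of_box_updInt hfin huniv hIY hY
      (box_mono (fun _ h => Event.evalB_bigAnd.1 h _ he) (box_right (box_of_dia hYW)))
  exact dia_of_box (box_and hW (box_and hY hZ))

end Deriv

theorem d5_derivable_in_axminus_general (S : Signature) (hfin : S.IsFinite)
    (huniv : S.Universal)
    (I : S.V → Option S.Val) (hI : I ∈ S.Int)
    (Y : S.V) (y : S.Val) (hy : y ∈ S.RV Y)
    (W : S.V) (w : S.Val) (hw : w ∈ S.RV W)
    (hIY : updInt I Y y ∈ S.Int) (hIW : updInt I W w ∈ S.Int)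
    (lZ : List ((X : S.V) × {x : S.Val // x ∈ S.RV X})) :
    Provable (AXminus S) (CForm.imp
      (CForm.and
        (CForm.dia (updInt I Y y) hIY
          (Event.and (Event.prim W w hw) (Event.conjEqL lZ)))
        (CForm.dia (updInt I W w) hIW
          (Event.and (Event.prim Y y hy) (Event.conjEqL lZ))))
      (CForm.dia I hI (Event.and (Event.prim W w hw)
        (Event.and (Event.prim Y y hy) (Event.conjEqL lZ))))) :=
  Deriv.toProvable <| Deriv.deduction <|
    Deriv.dia_of_dia_updInt_of_dia_updInt hfin huniv Deriv.hyp_head.and_left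
      Deriv.hyp_head.and_right

/-- Let `S` be a finite universal signature and let `AX⁻`
consist of D0, D2, D3, D6, D7, D8, D10(a), D10(b) and MP.  Then `AX⁻` proves
every instance of D5:
`AX⁻ ⊢ (⟨X ← x; Y ← y⟩(W = w ∧ Z = z) ∧ ⟨X ← x; W ← w⟩(Y = y ∧ Z = z)) ⇒
⟨X ← x⟩(W = w ∧ Y = y ∧ Z = z)`, and this holds for any subset `Z` of
`V − (X ∪ {W, Y})` (enumerated by the list `lZ`), not only
`Z = V − (X ∪ {W, Y})`. -/
theorem d5_derivable_in_axminus (S : Signature) (hfin : S.IsFinite)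
    (huniv : S.Universal)
    (I : S.V → Option S.Val) (hI : I ∈ S.Int)
    (Y : S.V) (y : S.Val) (hy : y ∈ S.RV Y)
    (W : S.V) (w : S.Val) (hw : w ∈ S.RV W)
    (hIY : updInt I Y y ∈ S.Int) (hIW : updInt I W w ∈ S.Int)
    (lZ : List ((X : S.V) × {x : S.Val // x ∈ S.RV X}))
    (hlZ : ∀ p ∈ lZ, I p.1 = none ∧ p.1 ≠ W ∧ p.1 ≠ Y)
    (hnd : (lZ.map Sigma.fst).Nodup) :
    Provable (AXminus S) (CForm.imp
      (CForm.and
        (CForm.dia (updInt I Y y) hIY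
          (Event.and (Event.prim W w hw) (Event.conjEqL lZ)))
        (CForm.dia (updInt I W w) hIW
          (Event.and (Event.prim Y y hy) (Event.conjEqL lZ))))
      (CForm.dia I hI (Event.and (Event.prim W w hw)
        (Event.and (Event.prim Y y hy) (Event.conjEqL lZ))))) :=
  d5_derivable_in_axminus_general S hfin huniv I hI Y y hy W w hw hIY hIW lZ

end Causal
end
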